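/- arXiv:math/0411042 — 6 statements merged into one kernel-verified Lean document; each statement's English description precedes it below -/
import Mathlib

section
/- Let N, M ≥ 1 be integers, let f_1, f_3, …, f_{2N-1} : ℝ → ℝ and f_2, f_4, …, f_{2M} : ℝ → ℝ be continuous, and let g : ℝ → ℝ be Lipschitz with x·g(x) > 0 for all x ≠ 0. Assume that f_{2l-1}(x) ≥ 0 for all x ∈ ℝ and all l ∈ {1,…,N}, and that f_1(x) > 0 for all x ≠ 0. Then the planar system u' = v, v' = -∑_{l=1}^{N} f_{2l-1}(u) v^{2l-1} - ∑_{l=1}^{M} f_{2l}(u) v^{2l} - g(u) has no nonconstant periodic solution. -/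
set_option maxHeartbeats 1000000
open Real Set Filter

section NonexAux

/-- Lipschitz-type bound for powers on [0,B]. -/
lemma pow_abs_sub_le (B : ℝ) (hB : 0 ≤ B) :
    ∀ (l : ℕ) (y y' : ℝ), y ∈ Icc 0 B → y' ∈ Icc 0 B →
      |y ^ l - y' ^ l| ≤ l * B ^ (l - 1) * |y - y'| := by
  intro l
  induction l with
  | zero => intro y y' _ _; simp
  | succ n ih =>
    intro y y' hy hy'
    have h1 : y ^ (n+1) - y' ^ (n+1) = y * (y ^ n - y' ^ n) + (y - y') * y' ^ n := by ring
    have h2 := ih y y' hy hy'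
    have hyn : |y' ^ n| ≤ B ^ n := by
      rw [abs_pow]
      exact pow_le_pow_left₀ (abs_nonneg _) (by rw [abs_of_nonneg hy'.1]; exact hy'.2) n
    have hyB : |y| ≤ B := by rw [abs_of_nonneg hy.1]; exact hy.2
    have hBn : B * B ^ (n-1) * n ≤ B ^ n * n := by
      rcases Nat.eq_zero_or_pos n with hn | hn
      · subst hn; simp
      · have h3 : B * B ^ (n-1) = B ^ ((n-1)+1) := by rw [pow_succ]; ring
        have h4 : (n-1) + 1 = n := by omega
        rw [h3, h4]
    have hsimp : n + 1 - 1 = n := by omega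
    rw [hsimp]
    calc |y ^ (n+1) - y' ^ (n+1)| ≤ |y * (y ^ n - y' ^ n)| + |(y - y') * y' ^ n| := by
          rw [h1]; exact abs_add_le _ _
      _ ≤ B * (n * B ^ (n-1) * |y - y'|) + |y - y'| * B ^ n := by
          rw [abs_mul, abs_mul]
          exact add_le_add (mul_le_mul hyB h2 (abs_nonneg _) hB)
            (mul_le_mul_of_nonneg_left hyn (abs_nonneg _))
      _ = (B * B ^ (n-1) * n) * |y - y'| + B ^ n * |y - y'| := by ring
      _ ≤ (B ^ n * n) * |y - y'| + B ^ n * |y - y'| :=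
          add_le_add (mul_le_mul_of_nonneg_right hBn (abs_nonneg _)) le_rfl
      _ = (↑(n+1)) * B ^ n * |y - y'| := by push_cast; ring

/-- If the derivative is positive inside, endpoint values increase strictly. -/
lemma arc_mono {u v : ℝ → ℝ} (hu : ∀ t, HasDerivAt u (v t) t)
    {a b : ℝ} (hab : a < b) (hpos : ∀ t ∈ Ioo a b, 0 < v t) : u a < u b := by
  have hcont : Continuous u := by
    rw [continuous_iff_continuousAt]; exact fun t => (hu t).continuousAt
  have := strictMonoOn_of_deriv_pos (convex_Icc a b) (hcont.continuousOn)
    (fun x hx => by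
      rw [interior_Icc] at hx
      rw [(hu x).deriv]; exact hpos x hx)
  exact this (left_mem_Icc.2 hab.le) (right_mem_Icc.2 hab.le) hab

/-- A continuous function with no zero on an open interval has constant sign there. -/
lemma const_sign {f : ℝ → ℝ} (hf : Continuous f) {a b : ℝ} (hab : a < b)
    (hne : ∀ s ∈ Ioo a b, f s ≠ 0) :
    (∀ s ∈ Ioo a b, 0 < f s) ∨ (∀ s ∈ Ioo a b, f s < 0) := by
  set c := (a + b) / 2 with hc
  have hcm : c ∈ Ioo a b := ⟨by linarith, by linarith⟩
  rcases lt_or_gt_of_ne (hne c hcm) with hneg | hpos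
  · right
    intro s hs
    by_contra hssign
    push_neg at hssign
    have hspos : 0 < f s := lt_of_le_of_ne hssign (Ne.symm (hne s hs))
    rcases lt_trichotomy s c with h | h | h
    · have : (0:ℝ) ∈ Ioo (f c) (f s) := ⟨hneg, hspos⟩
      obtain ⟨x, hx, hfx⟩ := intermediate_value_Ioo' h.le hf.continuousOn this
      exact hne x ⟨lt_trans hs.1 hx.1, lt_trans hx.2 hcm.2⟩ hfx
    · subst h; linarith
    · have : (0:ℝ) ∈ Ioo (f c) (f s) := ⟨hneg, hspos⟩
      obtain ⟨x, hx, hfx⟩ := intermediate_value_Ioo h.le hf.continuousOn this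
      exact hne x ⟨lt_trans hcm.1 hx.1, lt_trans hx.2 hs.2⟩ hfx
  · left
    intro s hs
    by_contra hssign
    push_neg at hssign
    have hsneg : f s < 0 := lt_of_le_of_ne hssign (hne s hs)
    rcases lt_trichotomy s c with h | h | h
    · have : (0:ℝ) ∈ Ioo (f s) (f c) := ⟨hsneg, hpos⟩
      obtain ⟨x, hx, hfx⟩ := intermediate_value_Ioo h.le hf.continuousOn this
      exact hne x ⟨lt_trans hs.1 hx.1, lt_trans hx.2 hcm.2⟩ hfx
    · subst h; linarith
    · have : (0:ℝ) ∈ Ioo (f s) (f c) := ⟨hsneg, hpos⟩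
      obtain ⟨x, hx, hfx⟩ := intermediate_value_Ioo' h.le hf.continuousOn this
      exact hne x ⟨lt_trans hcm.1 hx.1, lt_trans hx.2 hs.2⟩ hfx

/-- Near a zero with nonzero derivative, `f s` has the sign of `d * (s - τ)`. -/
lemma sign_near_zero {f : ℝ → ℝ} {d τ : ℝ} (hf : HasDerivAt f d τ) (hfτ : f τ = 0)
    (hd : d ≠ 0) :
    ∃ ε > 0, ∀ s, s ≠ τ → |s - τ| < ε → 0 < f s / (s - τ) * d := by
  have hslope := hasDerivAt_iff_tendsto_slope.1 hf
  have hev : ∀ᶠ s in nhdsWithin τ {τ}ᶜ, |slope f τ s - d| < |d| := by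
    have : Metric.ball d |d| ∈ nhds d := Metric.ball_mem_nhds d (abs_pos.2 hd)
    filter_upwards [hslope this] with s hs
    simpa [Real.dist_eq] using hs
  rw [nhdsWithin, Filter.eventually_inf_principal] at hev
  obtain ⟨ε, hε, hball⟩ := Metric.eventually_nhds_iff_ball.1 hev
  refine ⟨ε, hε, fun s hsne hsd => ?_⟩
  have h1 : |slope f τ s - d| < |d| := by
    apply hball
    · simpa [Real.dist_eq] using hsd
    · simpa using hsne
  have h2 : slope f τ s = f s / (s - τ) := by
    rw [slope_def_field, hfτ]; ring_nf
  rw [h2] at h1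
  set q := f s / (s - τ)
  have : (q - d) * d ≥ -(|q - d| * |d|) := by
    rw [← abs_mul]; exact neg_abs_le _
  nlinarith [sq_abs d, abs_nonneg (q - d), abs_nonneg d, mul_lt_mul_of_pos_right h1 (abs_pos.2 hd)]

lemma g_zero {g : ℝ → ℝ} (hgc : Continuous g)
    (hg_sign : ∀ x : ℝ, x ≠ 0 → 0 < x * g x) : g 0 = 0 := by
  have h1 : (0:ℝ) ≤ g 0 := by
    have htend : Tendsto g (nhdsWithin 0 (Ioi 0)) (nhds (g 0)) :=
      (hgc.tendsto 0).mono_left nhdsWithin_le_nhds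
    refine ge_of_tendsto htend ?_
    filter_upwards [self_mem_nhdsWithin] with x hx
    have h := hg_sign x (ne_of_gt hx)
    rcases mul_pos_iff.1 h with ⟨_, h2⟩ | ⟨h2, _⟩
    · exact h2.le
    · exact absurd hx (not_lt.2 h2.le)
  have h2 : g 0 ≤ 0 := by
    have htend : Tendsto g (nhdsWithin 0 (Iio 0)) (nhds (g 0)) :=
      (hgc.tendsto 0).mono_left nhdsWithin_le_nhds
    refine le_of_tendsto htend ?_
    filter_upwards [self_mem_nhdsWithin] with x hx
    have h := hg_sign x (ne_of_lt hx)
    rcases mul_pos_iff.1 h with ⟨h2, _⟩ | ⟨_, h2⟩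
    · exact absurd hx (not_lt.2 h2.le)
    · exact h2.le
  linarith

/-- Grönwall: if the solution touches the origin, it is identically zero. -/
lemma origin_const {N M : ℕ} {fodd feven : ℕ → ℝ → ℝ} {g u v : ℝ → ℝ} {K : NNReal}
    (hfodd_cont : ∀ l ∈ Finset.Icc 1 N, Continuous (fodd l))
    (hfeven_cont : ∀ l ∈ Finset.Icc 1 M, Continuous (feven l))
    (hg_lip : LipschitzWith K g) (hg0 : g 0 = 0)
    (hu : ∀ t : ℝ, HasDerivAt u (v t) t)
    (hv : ∀ t : ℝ, HasDerivAt v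
        (-(∑ l ∈ Finset.Icc 1 N, fodd l (u t) * v t ^ (2 * l - 1))
          - (∑ l ∈ Finset.Icc 1 M, feven l (u t) * v t ^ (2 * l)) - g (u t)) t)
    {t₀ : ℝ} (h0u : u t₀ = 0) (h0v : v t₀ = 0) : ∀ t, u t = 0 ∧ v t = 0 := by
  have hucont : Continuous u := by
    rw [continuous_iff_continuousAt]; exact fun t => (hu t).continuousAt
  have hvcont : Continuous v := by
    rw [continuous_iff_continuousAt]; exact fun t => (hv t).continuousAt
  set So : ℝ → ℝ := fun t => ∑ l ∈ Finset.Icc 1 N, fodd l (u t) * v t ^ (2 * l - 1) with hSo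
  set Se : ℝ → ℝ := fun t => ∑ l ∈ Finset.Icc 1 M, feven l (u t) * v t ^ (2 * l) with hSe
  set ρ : ℝ → ℝ := fun t => u t ^ 2 + v t ^ 2 with hρ
  set A : ℝ → ℝ := fun t =>
      (∑ l ∈ Finset.Icc 1 N, |fodd l (u t)| * |v t| ^ (2 * (l - 1)))
    + (∑ l ∈ Finset.Icc 1 M, |feven l (u t)| * |v t| ^ (2 * l - 1)) with hA
  set c : ℝ → ℝ := fun t => 1 + (K : ℝ) + 2 * A t with hc
  have hρ_nonneg : ∀ t, 0 ≤ ρ t := fun t => by positivity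
  have hρt : ∀ s, ρ s = u s ^ 2 + v s ^ 2 := fun _ => rfl
  have hρd : ∀ t, HasDerivAt ρ (2 * u t * v t + 2 * v t * (-So t - Se t - g (u t))) t := by
    intro t
    have h1 := ((hu t).pow 2).add ((hv t).pow 2)
    refine h1.congr_deriv ?_
    symm
    simp only [Nat.cast_ofNat, pow_one]
    ring
  -- pointwise bound |ρ'| ≤ c * ρ
  have hbound : ∀ t, |2 * u t * v t + 2 * v t * (-So t - Se t - g (u t))| ≤ c t * ρ t := by
    intro t
    have habs1 : |2 * u t * v t| ≤ ρ t := by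
      have := sq_nonneg (u t - v t); have := sq_nonneg (u t + v t)
      rw [abs_le]; constructor <;> nlinarith [hρt t]
    have hgu : |g (u t)| ≤ (K:ℝ) * |u t| := by
      have := hg_lip.dist_le_mul (u t) 0
      simpa [Real.dist_eq, hg0] using this
    have habs3 : |2 * v t * g (u t)| ≤ (K:ℝ) * ρ t := by
      have h1 : |2 * v t * g (u t)| = 2 * |v t| * |g (u t)| := by
        rw [abs_mul, abs_mul]; simp [abs_of_nonneg, mul_assoc]
      rw [h1]
      have h2 : 2 * |v t| * |g (u t)| ≤ 2 * |v t| * ((K:ℝ) * |u t|) := by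
        apply mul_le_mul_of_nonneg_left hgu; positivity
      have h3 : 2 * |v t| * ((K:ℝ) * |u t|) ≤ (K:ℝ) * ρ t := by
        have h4 : 2 * |u t| * |v t| ≤ ρ t := by
          have := sq_abs (u t); have := sq_abs (v t)
          nlinarith [hρt t, sq_nonneg (|u t| - |v t|)]
        calc 2 * |v t| * ((K:ℝ) * |u t|) = (K:ℝ) * (2 * |u t| * |v t|) := by ring
          _ ≤ (K:ℝ) * ρ t := mul_le_mul_of_nonneg_left h4 K.2
      linarith
    have habs2 : |v t * So t + v t * Se t| ≤ A t * v t ^ 2 := by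
      have ho : |v t * So t| ≤ (∑ l ∈ Finset.Icc 1 N, |fodd l (u t)| * |v t| ^ (2*(l-1))) * v t ^ 2 := by
        rw [hSo]
        calc |v t * ∑ l ∈ Finset.Icc 1 N, fodd l (u t) * v t ^ (2 * l - 1)|
            = |∑ l ∈ Finset.Icc 1 N, fodd l (u t) * v t ^ (2 * l - 1) * v t| := by
              rw [← Finset.sum_mul]; rw [abs_mul, abs_mul]; ring
          _ ≤ ∑ l ∈ Finset.Icc 1 N, |fodd l (u t) * v t ^ (2 * l - 1) * v t| :=
              Finset.abs_sum_le_sum_abs _ _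
          _ ≤ ∑ l ∈ Finset.Icc 1 N, |fodd l (u t)| * |v t| ^ (2*(l-1)) * v t ^ 2 := by
              apply Finset.sum_le_sum
              intro l hl
              have hl1 : 1 ≤ l := (Finset.mem_Icc.1 hl).1
              have hexp : 2 * l - 1 + 1 = 2*(l-1) + 2 := by omega
              refine le_of_eq ?_
              rw [abs_mul, abs_mul, abs_pow]
              calc |fodd l (u t)| * |v t| ^ (2*l-1) * |v t|
                  = |fodd l (u t)| * |v t| ^ (2*l-1+1) := by rw [pow_succ]; ring
                _ = |fodd l (u t)| * (|v t| ^ (2*(l-1)) * |v t| ^ 2) := by rw [hexp, pow_add]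
                _ = |fodd l (u t)| * |v t| ^ (2*(l-1)) * v t ^ 2 := by rw [sq_abs]; ring
          _ = (∑ l ∈ Finset.Icc 1 N, |fodd l (u t)| * |v t| ^ (2*(l-1))) * v t ^ 2 :=
              (Finset.sum_mul _ _ _).symm
      have he : |v t * Se t| ≤ (∑ l ∈ Finset.Icc 1 M, |feven l (u t)| * |v t| ^ (2*l-1)) * v t ^ 2 := by
        rw [hSe]
        calc |v t * ∑ l ∈ Finset.Icc 1 M, feven l (u t) * v t ^ (2 * l)|
            = |∑ l ∈ Finset.Icc 1 M, feven l (u t) * v t ^ (2 * l) * v t| := by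
              rw [← Finset.sum_mul]; rw [abs_mul, abs_mul]; ring
          _ ≤ ∑ l ∈ Finset.Icc 1 M, |feven l (u t) * v t ^ (2 * l) * v t| :=
              Finset.abs_sum_le_sum_abs _ _
          _ ≤ ∑ l ∈ Finset.Icc 1 M, |feven l (u t)| * |v t| ^ (2*l-1) * v t ^ 2 := by
              apply Finset.sum_le_sum
              intro l hl
              have hl1 : 1 ≤ l := (Finset.mem_Icc.1 hl).1
              have hexp : 2 * l + 1 = 2*l - 1 + 2 := by omega
              refine le_of_eq ?_
              rw [abs_mul, abs_mul, abs_pow]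
              calc |feven l (u t)| * |v t| ^ (2*l) * |v t|
                  = |feven l (u t)| * |v t| ^ (2*l+1) := by rw [pow_succ]; ring
                _ = |feven l (u t)| * (|v t| ^ (2*l-1) * |v t| ^ 2) := by rw [hexp, pow_add]
                _ = |feven l (u t)| * |v t| ^ (2*l-1) * v t ^ 2 := by rw [sq_abs]; ring
          _ = (∑ l ∈ Finset.Icc 1 M, |feven l (u t)| * |v t| ^ (2*l-1)) * v t ^ 2 :=
              (Finset.sum_mul _ _ _).symm
      calc |v t * So t + v t * Se t| ≤ |v t * So t| + |v t * Se t| := abs_add_le _ _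
        _ ≤ A t * v t ^ 2 := by rw [hA]; rw [add_mul]; exact add_le_add ho he
    have hv2ρ : v t ^ 2 ≤ ρ t := by nlinarith [hρt t, sq_nonneg (u t)]
    have hA_nonneg : 0 ≤ A t := by
      rw [hA]
      apply add_nonneg <;> apply Finset.sum_nonneg <;> intro l hl <;> positivity
    calc |2 * u t * v t + 2 * v t * (-So t - Se t - g (u t))|
        ≤ |2 * u t * v t| + 2 * |v t * So t + v t * Se t| + |2 * v t * g (u t)| := by
          have : 2 * u t * v t + 2 * v t * (-So t - Se t - g (u t))
              = 2 * u t * v t + (-(2 * (v t * So t + v t * Se t)) + -(2 * v t * g (u t))) := by ring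
          rw [this]
          calc _ ≤ |2 * u t * v t| + |(-(2 * (v t * So t + v t * Se t)) + -(2 * v t * g (u t)))| := abs_add_le _ _
            _ ≤ |2 * u t * v t| + (|(-(2 * (v t * So t + v t * Se t)))| + |(-(2 * v t * g (u t)))|) := by
                have := abs_add_le (-(2 * (v t * So t + v t * Se t))) (-(2 * v t * g (u t)))
                linarith
            _ = |2 * u t * v t| + 2 * |v t * So t + v t * Se t| + |2 * v t * g (u t)| := by
                rw [abs_neg, abs_neg, abs_mul 2]; simp [abs_of_nonneg]; ring
      _ ≤ ρ t + 2 * (A t * v t ^ 2) + (K:ℝ) * ρ t := by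
          have := mul_le_mul_of_nonneg_left habs2 (by norm_num : (0:ℝ) ≤ 2)
          linarith
      _ ≤ ρ t + 2 * A t * ρ t + (K:ℝ) * ρ t := by nlinarith [hρt t]
      _ = c t * ρ t := by rw [hc]; ring
  -- continuity of c
  have hAcont : Continuous A := by
    rw [hA]
    apply Continuous.add <;> apply continuous_finset_sum <;> intro l hl
    · exact (((hfodd_cont l hl).comp hucont).abs).mul ((hvcont.abs).pow _)
    · exact (((hfeven_cont l hl).comp hucont).abs).mul ((hvcont.abs).pow _)
  have hccont : Continuous c := by
    rw [hc]; continuity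
  have hρcont : Continuous ρ := (hucont.pow 2).add (hvcont.pow 2)
  -- main Grönwall argument
  intro t
  set R : ℝ := |t - t₀| + 1 with hR
  set J : Set ℝ := Icc (t₀ - R) (t₀ + R) with hJ
  have habsR : |t - t₀| < R := by rw [hR]; linarith [abs_nonneg (t - t₀)]
  have habs := abs_lt.1 habsR
  have htJ : t ∈ J := by rw [hJ, Set.mem_Icc]; constructor <;> linarith [habs.1, habs.2]
  have hRpos : (0:ℝ) < R := by rw [hR]; linarith [abs_nonneg (t - t₀)]
  have ht₀J : t₀ ∈ J := by rw [hJ, Set.mem_Icc]; constructor <;> linarith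
  obtain ⟨C, hC⟩ := (isCompact_Icc : IsCompact J).exists_bound_of_continuousOn hccont.continuousOn
  have hcC : ∀ s ∈ J, c s ≤ C := fun s hs => (le_abs_self _).trans (hC s hs)
  have hρzero : ∀ s ∈ J, ρ s = 0 := by
    intro s hs
    rcases le_total t₀ s with hst | hst
    · -- forward: φ = ρ * exp(-C x) antitone
      set φ : ℝ → ℝ := fun x => ρ x * exp (-C * x) with hφ
      have hφd : ∀ x, HasDerivAt φ
          ((2 * u x * v x + 2 * v x * (-So x - Se x - g (u x)) - C * ρ x) * exp (-C * x)) x := by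
        intro x
        have h1 := (hρd x).mul (((hasDerivAt_id x).const_mul (-C)).exp)
        refine h1.congr_deriv ?_
        symm
        simp [mul_comm]; ring
      have hanti : AntitoneOn φ J := by
        apply antitoneOn_of_deriv_nonpos (convex_Icc _ _)
        · exact (hρcont.mul (Real.continuous_exp.comp (continuous_const.mul continuous_id))).continuousOn
        · intro x hx; exact (hφd x).differentiableAt.differentiableWithinAt
        · intro x hx
          rw [(hφd x).deriv]
          have hxJ : x ∈ J := interior_subset hx
          have h2 : 2 * u x * v x + 2 * v x * (-So x - Se x - g (u x)) ≤ C * ρ x :=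
            le_trans (le_abs_self _) (le_trans (hbound x) (mul_le_mul_of_nonneg_right (hcC x hxJ) (hρ_nonneg x)))
          have := exp_pos (-C * x)
          nlinarith
      have h3 : φ s ≤ φ t₀ := hanti ht₀J hs hst
      have h4 : φ t₀ = 0 := by rw [hφ]; simp [hρ, h0u, h0v]
      have h5 : 0 ≤ φ s := mul_nonneg (hρ_nonneg s) (exp_pos _).le
      have h6 : φ s = 0 := le_antisymm (h4 ▸ h3) h5
      rcases mul_eq_zero.1 h6 with h7 | h7
      · exact h7
      · exact absurd h7 (exp_pos _).ne'
    · -- backward: ψ = ρ * exp(C x) monotone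
      set ψ : ℝ → ℝ := fun x => ρ x * exp (C * x) with hψ
      have hψd : ∀ x, HasDerivAt ψ
          ((2 * u x * v x + 2 * v x * (-So x - Se x - g (u x)) + C * ρ x) * exp (C * x)) x := by
        intro x
        have h1 := (hρd x).mul (((hasDerivAt_id x).const_mul C).exp)
        refine h1.congr_deriv ?_
        symm
        simp [mul_comm]; ring
      have hmono : MonotoneOn ψ J := by
        apply monotoneOn_of_deriv_nonneg (convex_Icc _ _)
        · exact (hρcont.mul (Real.continuous_exp.comp (continuous_const.mul continuous_id))).continuousOn
        · intro x hx; exact (hψd x).differentiableAt.differentiableWithinAt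
        · intro x hx
          rw [(hψd x).deriv]
          have hxJ : x ∈ J := interior_subset hx
          have h2 : -(C * ρ x) ≤ 2 * u x * v x + 2 * v x * (-So x - Se x - g (u x)) := by
            have := neg_abs_le (2 * u x * v x + 2 * v x * (-So x - Se x - g (u x)))
            have h3 := (hbound x).trans (mul_le_mul_of_nonneg_right (hcC x hxJ) (hρ_nonneg x))
            linarith
          have := exp_pos (C * x)
          nlinarith
      have h3 : ψ s ≤ ψ t₀ := hmono hs ht₀J hst
      have h4 : ψ t₀ = 0 := by rw [hψ]; simp [hρ, h0u, h0v]
      have h5 : 0 ≤ ψ s := mul_nonneg (hρ_nonneg s) (exp_pos _).le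
      have h6 : ψ s = 0 := le_antisymm (h4 ▸ h3) h5
      rcases mul_eq_zero.1 h6 with h7 | h7
      · exact h7
      · exact absurd h7 (exp_pos _).ne'
  have h := hρzero t htJ
  constructor
  · have : u t ^ 2 = 0 := by nlinarith [hρt t, sq_nonneg (u t), sq_nonneg (v t)]
    exact pow_eq_zero_iff (by norm_num) |>.1 this
  · have : v t ^ 2 = 0 := by nlinarith [hρt t, sq_nonneg (u t), sq_nonneg (v t)]
    exact pow_eq_zero_iff (by norm_num) |>.1 this

noncomputable def Psum (fodd : ℕ → ℝ → ℝ) (N : ℕ) (x y : ℝ) : ℝ :=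
  ∑ l ∈ Finset.Icc 1 N, fodd l x * Real.sqrt y ^ (2 * l - 1)

def Qsum (feven : ℕ → ℝ → ℝ) (M : ℕ) (x y : ℝ) : ℝ :=
  ∑ l ∈ Finset.Icc 1 M, feven l x * y ^ l

/-- On an arc where `v > 0`, the square of `v` as a function of `x = u` satisfies
an explicit ODE. -/
lemma arc_lemma {N M : ℕ} {fodd feven : ℕ → ℝ → ℝ} {g u v : ℝ → ℝ} {σ : ℝ}
    (hu : ∀ t, HasDerivAt u (v t) t)
    (hv : ∀ t, HasDerivAt v (-σ * (∑ l ∈ Finset.Icc 1 N, fodd l (u t) * v t ^ (2 * l - 1))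
        - (∑ l ∈ Finset.Icc 1 M, feven l (u t) * v t ^ (2 * l)) - g (u t)) t)
    {a b : ℝ} (hab : a < b) (hva : v a = 0) (hvb : v b = 0)
    (hpos : ∀ t ∈ Ioo a b, 0 < v t) :
    u a < u b ∧ ∃ Y : ℝ → ℝ,
      ContinuousOn Y (Icc (u a) (u b)) ∧ Y (u a) = 0 ∧ Y (u b) = 0 ∧
      (∀ x ∈ Ioo (u a) (u b), 0 < Y x) ∧
      (∀ x ∈ Ioo (u a) (u b), HasDerivAt Y
        (-2*σ*(Psum fodd N x (Y x)) - 2*(Qsum feven M x (Y x)) - 2*g x) x) := by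
  have hucont : Continuous u := by
    rw [continuous_iff_continuousAt]; exact fun t => (hu t).continuousAt
  have hvcont : Continuous v := by
    rw [continuous_iff_continuousAt]; exact fun t => (hv t).continuousAt
  have hmono : StrictMonoOn u (Icc a b) := by
    apply strictMonoOn_of_deriv_pos (convex_Icc a b) hucont.continuousOn
    intro x hx
    rw [interior_Icc] at hx
    rw [(hu x).deriv]; exact hpos x hx
  have hlt : u a < u b := hmono (left_mem_Icc.2 hab.le) (right_mem_Icc.2 hab.le) hab
  have hinj : InjOn u (Icc a b) := hmono.injOn
  have himg : u '' Icc a b = Icc (u a) (u b) := by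
    apply Subset.antisymm
    · rintro y ⟨t, ht, rfl⟩
      exact ⟨hmono.monotoneOn (left_mem_Icc.2 hab.le) ht ht.1,
             hmono.monotoneOn ht (right_mem_Icc.2 hab.le) ht.2⟩
    · exact intermediate_value_Icc hab.le hucont.continuousOn
  set β : ℝ → ℝ := Function.invFunOn u (Icc a b) with hβ
  have hβspec : ∀ x ∈ Icc (u a) (u b), β x ∈ Icc a b ∧ u (β x) = x := by
    intro x hx
    have hex : ∃ t ∈ Icc a b, u t = x := by
      rw [← himg] at hx; exact hx
    exact ⟨Function.invFunOn_mem hex, Function.invFunOn_eq hex⟩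
  have hβa : β (u a) = a := by
    have h := hβspec (u a) ⟨le_rfl, hlt.le⟩
    exact hinj h.1 (left_mem_Icc.2 hab.le) h.2
  have hβb : β (u b) = b := by
    have h := hβspec (u b) ⟨hlt.le, le_rfl⟩
    exact hinj h.1 (right_mem_Icc.2 hab.le) h.2
  have hβmem : ∀ x ∈ Ioo (u a) (u b), β x ∈ Ioo a b := by
    intro x hx
    have h := hβspec x (Ioo_subset_Icc_self hx)
    rcases h.1.1.lt_or_eq with h1 | h1
    · rcases h.1.2.lt_or_eq with h2 | h2
      · exact ⟨h1, h2⟩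
      · exfalso; rw [h2] at h; exact absurd h.2 (ne_of_gt hx.2)
    · exfalso; rw [← h1] at h; exact absurd h.2 (ne_of_lt hx.1)
  -- continuity of β on the closed interval, via the order structure
  have hβorder : ∀ x ∈ Icc (u a) (u b), ∀ t ∈ Icc a b,
      (u t < x → t < β x) ∧ (x < u t → β x < t) := by
    intro x hx t ht
    have hspec := hβspec x hx
    constructor
    · intro hlt'
      by_contra hcon
      push_neg at hcon
      have := hmono.monotoneOn hspec.1 ht hcon
      rw [hspec.2] at this
      linarith
    · intro hlt'
      by_contra hcon
      push_neg at hcon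
      have := hmono.monotoneOn ht hspec.1 hcon
      rw [hspec.2] at this
      linarith
  have hβcont : ContinuousOn β (Icc (u a) (u b)) := by
    intro x₀ hx₀
    have ht₀ := hβspec x₀ hx₀
    rw [ContinuousWithinAt]
    rw [tendsto_order]
    constructor
    · intro c hc
      rcases lt_or_ge c a with hca | hca
      · filter_upwards [self_mem_nhdsWithin] with x hx
        exact lt_of_lt_of_le hca (hβspec x hx).1.1
      · -- c ∈ [a, β x₀); pick c' strictly between
        obtain ⟨c', hc1, hc2⟩ := exists_between hc
        have hc'm : c' ∈ Icc a b := ⟨hca.trans hc1.le, hc2.le.trans ht₀.1.2⟩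
        have huc' : u c' < x₀ := by
          have := hmono hc'm ht₀.1 hc2
          rwa [ht₀.2] at this
        have hmem : {x : ℝ | u c' < x} ∈ nhdsWithin x₀ (Icc (u a) (u b)) := by
          apply mem_nhdsWithin_of_mem_nhds
          exact isOpen_Ioi.mem_nhds huc'
        filter_upwards [hmem, self_mem_nhdsWithin] with x hx1 hx2
        exact hc1.trans ((hβorder x hx2 c' hc'm).1 hx1)
    · intro c hc
      rcases lt_or_ge b c with hcb | hcb
      · filter_upwards [self_mem_nhdsWithin] with x hx
        exact lt_of_le_of_lt (hβspec x hx).1.2 hcb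
      · obtain ⟨c', hc1, hc2⟩ := exists_between hc
        have hc'm : c' ∈ Icc a b := ⟨ht₀.1.1.trans hc1.le, hc2.le.trans hcb⟩
        have huc' : x₀ < u c' := by
          have := hmono ht₀.1 hc'm hc1
          rwa [ht₀.2] at this
        have hmem : {x : ℝ | x < u c'} ∈ nhdsWithin x₀ (Icc (u a) (u b)) := by
          apply mem_nhdsWithin_of_mem_nhds
          exact isOpen_Iio.mem_nhds huc'
        filter_upwards [hmem, self_mem_nhdsWithin] with x hx1 hx2
        exact lt_of_lt_of_le ((hβorder x hx2 c' hc'm).2 hx1) hc2.le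
  have hβd : ∀ x ∈ Ioo (u a) (u b), HasDerivAt β (v (β x))⁻¹ x := by
    intro x hx
    have hne : v (β x) ≠ 0 := ne_of_gt (hpos _ (hβmem x hx))
    have hca : ContinuousAt β x :=
      hβcont.continuousAt (Icc_mem_nhds hx.1 hx.2)
    have hev : ∀ᶠ y in nhds x, u (β y) = y := by
      filter_upwards [isOpen_Ioo.mem_nhds hx] with y hy
      exact (hβspec y (Ioo_subset_Icc_self hy)).2
    exact HasDerivAt.of_local_left_inverse hca (hu (β x)) hne hev
  refine ⟨hlt, fun x => v (β x) ^ 2, ?_,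
    by show v (β (u a)) ^ 2 = 0; rw [hβa, hva]; norm_num,
    by show v (β (u b)) ^ 2 = 0; rw [hβb, hvb]; norm_num, ?_, ?_⟩
  · exact ((hvcont.comp_continuousOn hβcont).pow 2)
  · intro x hx
    exact pow_pos (hpos _ (hβmem x hx)) 2
  · intro x hx
    have hne : v (β x) ≠ 0 := ne_of_gt (hpos _ (hβmem x hx))
    have h1 : HasDerivAt (fun y => v (β y))
        ((-σ * (∑ l ∈ Finset.Icc 1 N, fodd l (u (β x)) * v (β x) ^ (2 * l - 1))
          - (∑ l ∈ Finset.Icc 1 M, feven l (u (β x)) * v (β x) ^ (2 * l)) - g (u (β x)))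
          * (v (β x))⁻¹) x := (hv (β x)).comp x (hβd x hx)
    have h2 := h1.pow 2
    refine h2.congr_deriv ?_
    symm
    have hut : u (β x) = x := (hβspec x (Ioo_subset_Icc_self hx)).2
    have hsq : Real.sqrt (v (β x) ^ 2) = v (β x) := by
      rw [Real.sqrt_sq (hpos _ (hβmem x hx)).le]
    have hP : Psum fodd N x (v (β x) ^ 2)
        = ∑ l ∈ Finset.Icc 1 N, fodd l x * v (β x) ^ (2 * l - 1) := by
      unfold Psum
      exact Finset.sum_congr rfl (fun l _ => by rw [hsq])
    have hQ : Qsum feven M x (v (β x) ^ 2)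
        = ∑ l ∈ Finset.Icc 1 M, feven l x * v (β x) ^ (2 * l) := by
      unfold Qsum
      exact Finset.sum_congr rfl (fun l _ => by rw [← pow_mul])
    rw [hP, hQ, hut]
    push_cast
    field_simp

/-- The key comparison: a "down-up" turn strictly decreases the turning value. -/
lemma comparison {N M : ℕ} {fodd feven : ℕ → ℝ → ℝ} {g : ℝ → ℝ}
    (hN : 1 ≤ N)
    (hfodd_cont : ∀ l ∈ Finset.Icc 1 N, Continuous (fodd l))
    (hfeven_cont : ∀ l ∈ Finset.Icc 1 M, Continuous (feven l))
    (hfodd_nonneg : ∀ l ∈ Finset.Icc 1 N, ∀ x : ℝ, 0 ≤ fodd l x)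
    (hf1_pos : ∀ x : ℝ, x ≠ 0 → 0 < fodd 1 x)
    {z r₁ r₂ : ℝ} (h1 : z < r₁) (h2 : z < r₂) {Y₁ Y₂ : ℝ → ℝ}
    (hY₁c : ContinuousOn Y₁ (Icc z r₁)) (hY₁z : Y₁ z = 0) (hY₁r : Y₁ r₁ = 0)
    (hY₁pos : ∀ x ∈ Ioo z r₁, 0 < Y₁ x)
    (hY₁d : ∀ x ∈ Ioo z r₁, HasDerivAt Y₁
      (2*(Psum fodd N x (Y₁ x)) - 2*(Qsum feven M x (Y₁ x)) - 2*g x) x)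
    (hY₂c : ContinuousOn Y₂ (Icc z r₂)) (hY₂z : Y₂ z = 0) (hY₂r : Y₂ r₂ = 0)
    (hY₂pos : ∀ x ∈ Ioo z r₂, 0 < Y₂ x)
    (hY₂d : ∀ x ∈ Ioo z r₂, HasDerivAt Y₂
      (-2*(Psum fodd N x (Y₂ x)) - 2*(Qsum feven M x (Y₂ x)) - 2*g x) x) :
    r₂ < r₁ := by
  by_contra hcon
  push_neg at hcon  -- r₁ ≤ r₂
  have hsub : Icc z r₁ ⊆ Icc z r₂ := Icc_subset_Icc le_rfl hcon
  have hsub' : Ioo z r₁ ⊆ Ioo z r₂ := Ioo_subset_Ioo le_rfl hcon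
  -- clamp to [z, r₁]
  set pr : ℝ → ℝ := fun x => max z (min x r₁) with hprdef
  have hprcont : Continuous pr := continuous_const.max (continuous_id.min continuous_const)
  have hprmem : ∀ x, pr x ∈ Icc z r₁ :=
    fun x => ⟨le_max_left _ _, max_le h1.le (min_le_right _ _)⟩
  have hprid : ∀ x ∈ Icc z r₁, pr x = x := by
    intro x hx
    rw [hprdef]
    simp only [min_eq_left hx.2, max_eq_right hx.1]
  set Z₁ : ℝ → ℝ := fun x => Y₁ (pr x) with hZ₁
  set Z₂ : ℝ → ℝ := fun x => Y₂ (pr x) with hZ₂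
  have hZ₁cont : Continuous Z₁ := hY₁c.comp_continuous hprcont hprmem
  have hZ₂cont : Continuous Z₂ :=
    (hY₂c.mono hsub).comp_continuous hprcont hprmem
  set D : ℝ → ℝ := fun x => Z₁ x - Z₂ x with hD
  have hDcont : Continuous D := hZ₁cont.sub hZ₂cont
  have hDeq : ∀ x ∈ Icc z r₁, D x = Y₁ x - Y₂ x := by
    intro x hx; rw [hD]; simp only [hZ₁, hZ₂, hprid x hx]
  have hDz : D z = 0 := by
    rw [hDeq z ⟨le_rfl, h1.le⟩, hY₁z, hY₂z]; ring
  -- nonnegativity and bounds of Y₁, Y₂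
  have hY₁nonneg : ∀ x ∈ Icc z r₁, 0 ≤ Y₁ x := by
    intro x hx
    rcases eq_or_lt_of_le hx.1 with h | h
    · rw [← h, hY₁z]
    rcases eq_or_lt_of_le hx.2 with h' | h'
    · rw [h', hY₁r]
    · exact (hY₁pos x ⟨h, h'⟩).le
  have hY₂nonneg : ∀ x ∈ Icc z r₂, 0 ≤ Y₂ x := by
    intro x hx
    rcases eq_or_lt_of_le hx.1 with h | h
    · rw [← h, hY₂z]
    rcases eq_or_lt_of_le hx.2 with h' | h'
    · rw [h', hY₂r]
    · exact (hY₂pos x ⟨h, h'⟩).le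
  obtain ⟨B₁, hB₁⟩ := (isCompact_Icc (a := z) (b := r₁)).exists_bound_of_continuousOn hY₁c
  obtain ⟨B₂, hB₂⟩ := (isCompact_Icc (a := z) (b := r₂)).exists_bound_of_continuousOn hY₂c
  set B : ℝ := max (max B₁ B₂) 1 with hB
  have hBpos : (0:ℝ) < B := lt_of_lt_of_le one_pos (le_max_right _ _)
  have hY₁B : ∀ x ∈ Icc z r₁, Y₁ x ∈ Icc 0 B := by
    intro x hx
    refine ⟨hY₁nonneg x hx, ?_⟩
    calc Y₁ x ≤ ‖Y₁ x‖ := le_abs_self _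
      _ ≤ B₁ := hB₁ x hx
      _ ≤ B := le_trans (le_max_left _ _) (le_max_left _ _)
  have hY₂B : ∀ x ∈ Icc z r₂, Y₂ x ∈ Icc 0 B := by
    intro x hx
    refine ⟨hY₂nonneg x hx, ?_⟩
    calc Y₂ x ≤ ‖Y₂ x‖ := le_abs_self _
      _ ≤ B₂ := hB₂ x hx
      _ ≤ B := le_trans (le_max_right _ _) (le_max_left _ _)
  -- Lipschitz constant for Qsum in y
  set q : ℝ → ℝ := fun x => ∑ l ∈ Finset.Icc 1 M, |feven l x| * (l * B ^ (l-1)) with hq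
  have hqcont : Continuous q := by
    apply continuous_finset_sum
    intro l hl
    exact ((hfeven_cont l hl).abs).mul continuous_const
  obtain ⟨L₀, hL₀⟩ := (isCompact_Icc (a := z) (b := r₁)).exists_bound_of_continuousOn hqcont.continuousOn
  set L : ℝ := max L₀ 0 with hL
  have hLnonneg : (0:ℝ) ≤ L := le_max_right _ _
  have hqL : ∀ x ∈ Icc z r₁, q x ≤ L :=
    fun x hx => le_trans (le_abs_self _) (le_trans (hL₀ x hx) (le_max_left _ _))
  have hQlip : ∀ x ∈ Icc z r₁, ∀ y y' : ℝ, y ∈ Icc 0 B → y' ∈ Icc 0 B →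
      |Qsum feven M x y - Qsum feven M x y'| ≤ L * |y - y'| := by
    intro x hx y y' hy hy'
    have h3 : Qsum feven M x y - Qsum feven M x y'
        = ∑ l ∈ Finset.Icc 1 M, feven l x * (y ^ l - y' ^ l) := by
      unfold Qsum
      rw [← Finset.sum_sub_distrib]
      exact Finset.sum_congr rfl (fun l _ => by ring)
    rw [h3]
    calc |∑ l ∈ Finset.Icc 1 M, feven l x * (y ^ l - y' ^ l)|
        ≤ ∑ l ∈ Finset.Icc 1 M, |feven l x * (y ^ l - y' ^ l)| :=
          Finset.abs_sum_le_sum_abs _ _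
      _ ≤ ∑ l ∈ Finset.Icc 1 M, |feven l x| * (l * B ^ (l-1)) * |y - y'| := by
          apply Finset.sum_le_sum
          intro l hl
          rw [abs_mul, mul_assoc]
          exact mul_le_mul_of_nonneg_left (pow_abs_sub_le B hBpos.le l y y' hy hy') (abs_nonneg _)
      _ = q x * |y - y'| := (Finset.sum_mul _ _ _).symm
      _ ≤ L * |y - y'| := mul_le_mul_of_nonneg_right (hqL x hx) (abs_nonneg _)
  -- positivity facts about Psum
  have hPnonneg : ∀ x y : ℝ, 0 ≤ Psum fodd N x y := by
    intro x y
    apply Finset.sum_nonneg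
    intro l hl
    exact mul_nonneg (hfodd_nonneg l hl x) (pow_nonneg (Real.sqrt_nonneg _) _)
  have hPpos : ∀ x y : ℝ, x ≠ 0 → 0 < y → 0 < Psum fodd N x y := by
    intro x y hx hy
    have h1mem : (1:ℕ) ∈ Finset.Icc 1 N := Finset.mem_Icc.2 ⟨le_rfl, hN⟩
    have hterm : 0 < fodd 1 x * Real.sqrt y ^ (2*1-1) := by
      norm_num
      exact mul_pos (hf1_pos x hx) (Real.sqrt_pos.2 hy)
    calc (0:ℝ) < fodd 1 x * Real.sqrt y ^ (2*1-1) := hterm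
      _ ≤ Psum fodd N x y := Finset.single_le_sum
          (f := fun l => fodd l x * Real.sqrt y ^ (2*l-1))
          (fun l hl => mul_nonneg (hfodd_nonneg l hl x) (pow_nonneg (Real.sqrt_nonneg _) _)) h1mem
  -- derivative of D inside (z, r₁)
  have hDd : ∀ x ∈ Ioo z r₁, HasDerivAt D
      (2*(Psum fodd N x (Y₁ x)) + 2*(Psum fodd N x (Y₂ x))
        - 2*(Qsum feven M x (Y₁ x) - Qsum feven M x (Y₂ x))) x := by
    intro x hx
    have hsubder := (hY₁d x hx).sub (hY₂d x (hsub' hx))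
    have heq : D =ᶠ[nhds x] fun y => Y₁ y - Y₂ y := by
      filter_upwards [isOpen_Ioo.mem_nhds hx] with y hy
      exact hDeq y (Ioo_subset_Icc_self hy)
    have := hsubder.congr_of_eventuallyEq heq
    refine this.congr_deriv ?_
    symm
    ring
  -- Step A : D ≥ 0 on [z, r₁]
  have hDnonneg : ∀ x ∈ Icc z r₁, 0 ≤ D x := by
    by_contra hcon2
    push_neg at hcon2
    obtain ⟨x', hx'mem, hx'⟩ := hcon2
    -- produce a point of Ioo z r₁ where D < 0
    have hx₁ : ∃ x₁ ∈ Ioo z r₁, D x₁ < 0 := by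
      rcases eq_or_lt_of_le hx'mem.1 with h | h
      · exfalso; rw [← h, hDz] at hx'; exact lt_irrefl _ hx'
      rcases eq_or_lt_of_le hx'mem.2 with h' | h'
      · -- x' = r₁ : use continuity
        have hopen : IsOpen {x | D x < 0} := isOpen_lt hDcont continuous_const
        obtain ⟨ε, hε, hball⟩ := Metric.isOpen_iff.1 hopen x' (by simpa using hx')
        set δ : ℝ := min (ε/2) ((r₁ - z)/2) with hδ
        have hδpos : 0 < δ := lt_min (by linarith) (by linarith)
        refine ⟨x' - δ, ⟨?_, ?_⟩, ?_⟩
        · have : δ ≤ (r₁ - z)/2 := min_le_right _ _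
          rw [h'] at *; linarith
        · rw [h']; linarith
        · apply hball
          rw [Metric.mem_ball, Real.dist_eq]
          have : δ ≤ ε/2 := min_le_left _ _
          rw [abs_of_nonpos (by linarith)]
          linarith
      · exact ⟨x', ⟨h, h'⟩, hx'⟩
    obtain ⟨x₁, hx₁mem, hx₁neg⟩ := hx₁
    set K : Set ℝ := Icc z x₁ ∩ {x | 0 ≤ D x} with hK
    have hKclosed : IsClosed K := isClosed_Icc.inter (isClosed_le continuous_const hDcont)
    have hKne : K.Nonempty := ⟨z, ⟨le_rfl, hx₁mem.1.le⟩, hDz.ge⟩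
    have hKbdd : BddAbove K := BddAbove.mono (inter_subset_left) bddAbove_Icc
    set x₀ : ℝ := sSup K with hx₀def
    have hx₀K : x₀ ∈ K := hKclosed.csSup_mem hKne hKbdd
    have hx₀le : x₀ ≤ x₁ := hx₀K.1.2
    have hx₀lt : x₀ < x₁ := by
      rcases eq_or_lt_of_le hx₀le with h | h
      · exfalso; have := hx₀K.2; rw [h] at this; exact absurd hx₁neg (not_lt.2 this)
      · exact h
    have hneg : ∀ x ∈ Ioc x₀ x₁, D x < 0 := by
      intro x hx
      by_contra hcc
      push_neg at hcc
      have : x ∈ K := ⟨⟨hx₀K.1.1.trans hx.1.le, hx.2⟩, hcc⟩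
      exact absurd (le_csSup hKbdd this) (not_le.2 hx.1)
    have hDx₀ : D x₀ = 0 := by
      refine le_antisymm ?_ hx₀K.2
      have htend : Tendsto D (nhdsWithin x₀ (Ioi x₀)) (nhds (D x₀)) :=
        (hDcont.tendsto x₀).mono_left nhdsWithin_le_nhds
      refine le_of_tendsto htend ?_
      filter_upwards [Ioc_mem_nhdsGT_of_mem ⟨le_rfl, hx₀lt⟩] with x hx
      exact (hneg x hx).le
    -- monotone function h = D * exp(-(2L)x) on [x₀, x₁]
    set hfun : ℝ → ℝ := fun x => D x * exp (-(2*L) * x) with hhfun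
    have hx₀z : z ≤ x₀ := hx₀K.1.1
    have hIoosub : Ioo x₀ x₁ ⊆ Ioo z r₁ :=
      Ioo_subset_Ioo (le_trans (le_max_left z x₀) (by rw [max_eq_right hx₀z])) hx₁mem.2.le
    have hhd : ∀ x ∈ Ioo x₀ x₁, HasDerivAt hfun
        ((2*(Psum fodd N x (Y₁ x)) + 2*(Psum fodd N x (Y₂ x))
          - 2*(Qsum feven M x (Y₁ x) - Qsum feven M x (Y₂ x)) - (2*L) * D x) * exp (-(2*L) * x)) x := by
      intro x hx
      have h1 := (hDd x (hIoosub hx)).mul (((hasDerivAt_id x).const_mul (-(2*L))).exp)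
      refine h1.congr_deriv ?_
      symm
      simp [mul_comm]
      ring
    have hmono2 : MonotoneOn hfun (Icc x₀ x₁) := by
      apply monotoneOn_of_deriv_nonneg (convex_Icc _ _)
      · exact (hDcont.mul (Real.continuous_exp.comp (continuous_const.mul continuous_id))).continuousOn
      · intro x hx
        rw [interior_Icc] at hx
        exact (hhd x hx).differentiableAt.differentiableWithinAt
      · intro x hx
        rw [interior_Icc] at hx
        rw [(hhd x hx).deriv]
        have hxI : x ∈ Ioo z r₁ := hIoosub hx
        have hxIcc : x ∈ Icc z r₁ := Ioo_subset_Icc_self hxI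
        have hDx : D x = Y₁ x - Y₂ x := hDeq x hxIcc
        have hDxneg : D x < 0 := hneg x ⟨hx.1, hx.2.le⟩
        have hqlip := hQlip x hxIcc (Y₁ x) (Y₂ x) (hY₁B x hxIcc) (hY₂B x (hsub hxIcc))
        have habs := abs_le.1 hqlip
        have habsy : |Y₁ x - Y₂ x| = -(D x) := by
          rw [← hDx, abs_of_neg hDxneg]
        rw [habsy] at habs
        have hP1 := hPnonneg x (Y₁ x)
        have hP2 := hPnonneg x (Y₂ x)
        have hexp := exp_pos (-(2*L) * x)
        have hcore : 0 ≤ 2*(Psum fodd N x (Y₁ x)) + 2*(Psum fodd N x (Y₂ x))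
            - 2*(Qsum feven M x (Y₁ x) - Qsum feven M x (Y₂ x)) - (2*L) * D x := by
          nlinarith [habs.1, habs.2]
        exact mul_nonneg hcore hexp.le
      
    have := hmono2 (left_mem_Icc.2 hx₀lt.le) (right_mem_Icc.2 hx₀lt.le) hx₀lt.le
    rw [hhfun] at this
    simp only [hDx₀, zero_mul] at this
    nlinarith [exp_pos (-(2*L) * x₁)]
  -- Step B : strict inequality via the integral of P along Y₂
  set ψ : ℝ → ℝ := fun s => 2 * Psum fodd N (pr s) (Z₂ s) * exp ((2*L) * pr s) with hψdef
  have hψcont : Continuous ψ := by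
    have hPc : Continuous (fun s => Psum fodd N (pr s) (Z₂ s)) := by
      apply continuous_finset_sum
      intro l hl
      exact ((hfodd_cont l hl).comp hprcont).mul
        ((Real.continuous_sqrt.comp hZ₂cont).pow _)
    exact (continuous_const.mul hPc).mul (Real.continuous_exp.comp (continuous_const.mul hprcont))
  have hψnonneg : ∀ s, 0 ≤ ψ s := by
    intro s
    have := hPnonneg (pr s) (Z₂ s)
    have := exp_pos ((2*L) * pr s)
    rw [hψdef]
    positivity
  set F : ℝ → ℝ := fun x => ∫ s in z..x, ψ s with hF
  have hFd : ∀ x : ℝ, HasDerivAt F (ψ x) x := by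
    intro x
    exact intervalIntegral.integral_hasDerivAt_right (hψcont.intervalIntegrable _ _)
      (hψcont.stronglyMeasurableAtFilter _ _) hψcont.continuousAt
  have hFcont : Continuous F := by
    rw [continuous_iff_continuousAt]; exact fun x => (hFd x).continuousAt
  set Φ : ℝ → ℝ := fun x => D x * exp ((2*L) * x) - F x with hΦ
  have hΦd : ∀ x ∈ Ioo z r₁, HasDerivAt Φ
      ((2*(Psum fodd N x (Y₁ x)) + 2*(Psum fodd N x (Y₂ x))
        - 2*(Qsum feven M x (Y₁ x) - Qsum feven M x (Y₂ x)) + (2*L) * D x) * exp ((2*L) * x)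
        - ψ x) x := by
    intro x hx
    have h1 := ((hDd x hx).mul (((hasDerivAt_id x).const_mul (2*L)).exp)).sub (hFd x)
    refine h1.congr_deriv ?_
    symm
    simp [mul_comm]
    ring
  have hΦmono : MonotoneOn Φ (Icc z r₁) := by
    apply monotoneOn_of_deriv_nonneg (convex_Icc _ _)
    · exact ((hDcont.mul (Real.continuous_exp.comp (continuous_const.mul continuous_id))).sub hFcont).continuousOn
    · intro x hx
      rw [interior_Icc] at hx
      exact (hΦd x hx).differentiableAt.differentiableWithinAt
    · intro x hx
      rw [interior_Icc] at hx
      rw [(hΦd x hx).deriv]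
      have hxIcc : x ∈ Icc z r₁ := Ioo_subset_Icc_self hx
      have hDx : D x = Y₁ x - Y₂ x := hDeq x hxIcc
      have hDxnn : 0 ≤ D x := hDnonneg x hxIcc
      have hqlip := hQlip x hxIcc (Y₁ x) (Y₂ x) (hY₁B x hxIcc) (hY₂B x (hsub hxIcc))
      have habs := abs_le.1 hqlip
      have habsy : |Y₁ x - Y₂ x| = D x := by rw [← hDx, abs_of_nonneg hDxnn]
      rw [habsy] at habs
      have hP1 := hPnonneg x (Y₁ x)
      have hψx : ψ x = 2 * Psum fodd N x (Y₂ x) * exp ((2*L) * x) := by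
        rw [hψdef]
        simp only [hZ₂, hprid x hxIcc]
      rw [hψx]
      have hexp := exp_pos ((2*L) * x)
      have hcore : 2 * Psum fodd N x (Y₂ x) ≤ 2*(Psum fodd N x (Y₁ x)) + 2*(Psum fodd N x (Y₂ x))
          - 2*(Qsum feven M x (Y₁ x) - Qsum feven M x (Y₂ x)) + (2*L) * D x := by
        nlinarith [habs.1, habs.2]
      nlinarith [hexp, hcore]
  -- conclusion of monotonicity
  have hΦend := hΦmono (left_mem_Icc.2 h1.le) (right_mem_Icc.2 h1.le) h1.le
  have hΦz : Φ z = 0 := by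
    rw [hΦ]
    simp only [hDz, zero_mul, hF, intervalIntegral.integral_same, zero_sub, neg_eq_zero]
  have hDr₁ : D r₁ ≤ 0 := by
    rw [hDeq r₁ (right_mem_Icc.2 h1.le), hY₁r]
    have := hY₂nonneg r₁ ⟨h1.le, hcon⟩
    linarith
  have hintle : F r₁ ≤ 0 := by
    have : Φ r₁ ≥ 0 := by rw [← hΦz]; exact hΦend
    rw [hΦ] at this
    simp only at this
    nlinarith [exp_pos ((2*L) * r₁), hDr₁, mul_nonpos_of_nonpos_of_nonneg hDr₁ (exp_pos ((2*L) * r₁)).le]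
  -- the integral is strictly positive
  have hs₀ : ∃ s₀, s₀ ∈ Ioo z r₁ ∧ s₀ ≠ 0 := by
    rcases eq_or_ne (z + (r₁ - z)/3) 0 with h | h
    · refine ⟨z + 2*(r₁ - z)/3, ⟨by linarith, by linarith⟩, fun hcc => ?_⟩
      linarith
    · exact ⟨z + (r₁ - z)/3, ⟨by linarith, by linarith⟩, h⟩
  obtain ⟨s₀, hs₀m, hs₀ne⟩ := hs₀
  have hψs₀ : 0 < ψ s₀ := by
    have hpr0 : pr s₀ = s₀ := hprid s₀ (Ioo_subset_Icc_self hs₀m)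
    have hZ₂s₀ : Z₂ s₀ = Y₂ s₀ := by rw [hZ₂]; simp only [hpr0]
    have hY₂s₀ : 0 < Y₂ s₀ := hY₂pos s₀ (hsub' hs₀m)
    have hPp : 0 < Psum fodd N s₀ (Y₂ s₀) := hPpos s₀ (Y₂ s₀) hs₀ne hY₂s₀
    rw [hψdef]
    simp only [hpr0, hZ₂s₀]
    positivity
  -- find a small interval around s₀ where ψ > ψ s₀ / 2
  have hopen : IsOpen {s | ψ s₀ / 2 < ψ s} := isOpen_lt continuous_const hψcont
  obtain ⟨ε, hε, hball⟩ := Metric.isOpen_iff.1 hopen s₀ (by simp; linarith)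
  set δ : ℝ := min (ε/2) (min ((s₀ - z)/2) ((r₁ - s₀)/2)) with hδ
  have hδpos : 0 < δ :=
    lt_min (by linarith) (lt_min (by have := hs₀m.1; linarith) (by have := hs₀m.2; linarith))
  have hδε : δ < ε := lt_of_le_of_lt (min_le_left _ _) (by linarith)
  have hδz : z ≤ s₀ - δ := by
    have h5 : δ ≤ (s₀ - z)/2 := le_trans (min_le_right _ _) (min_le_left _ _)
    have := hs₀m.1; linarith
  have hδr : s₀ + δ ≤ r₁ := by
    have h5 : δ ≤ (r₁ - s₀)/2 := le_trans (min_le_right _ _) (min_le_right _ _)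
    have := hs₀m.2; linarith
  have hmid : 0 < ∫ s in (s₀ - δ)..(s₀ + δ), ψ s := by
    apply intervalIntegral.intervalIntegral_pos_of_pos_on (hψcont.intervalIntegrable _ _)
    · intro x hx
      have : x ∈ Metric.ball s₀ ε := by
        rw [Metric.mem_ball, Real.dist_eq, abs_lt]
        constructor <;> [linarith [hx.1]; linarith [hx.2]]
      have := hball this
      simp at this
      linarith [hψnonneg s₀, this]
    · linarith
  have hleft : 0 ≤ ∫ s in z..(s₀ - δ), ψ s :=
    intervalIntegral.integral_nonneg hδz (fun x _ => hψnonneg x)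
  have hright : 0 ≤ ∫ s in (s₀ + δ)..r₁, ψ s :=
    intervalIntegral.integral_nonneg hδr (fun x _ => hψnonneg x)
  have hsplit : F r₁ = (∫ s in z..(s₀ - δ), ψ s) + (∫ s in (s₀ - δ)..(s₀ + δ), ψ s)
      + (∫ s in (s₀ + δ)..r₁, ψ s) := by
    rw [hF]
    rw [intervalIntegral.integral_add_adjacent_intervals (hψcont.intervalIntegrable _ _) (hψcont.intervalIntegrable _ _),
        intervalIntegral.integral_add_adjacent_intervals (hψcont.intervalIntegrable _ _) (hψcont.intervalIntegrable _ _)]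
  have : 0 < F r₁ := by rw [hsplit]; linarith
  linarith

end NonexAux

/-- **Non-existence (Theorem 1).** If all the odd-coefficient functions
`f_{2l-1}` are nonnegative and `f_1 > 0` off the origin, the system
`u' = v`, `v' = -∑ f_{2l-1}(u) v^(2l-1) - ∑ f_{2l}(u) v^(2l) - g(u)`
has no nonconstant periodic solution. -/
theorem nonexistence_general (N M : ℕ) (hN : 1 ≤ N) (hM : 1 ≤ M)
    (fodd feven : ℕ → ℝ → ℝ) (g : ℝ → ℝ)
    (hfodd_cont : ∀ l ∈ Finset.Icc 1 N, Continuous (fodd l))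
    (hfeven_cont : ∀ l ∈ Finset.Icc 1 M, Continuous (feven l))
    (hg_lip : ∃ K : NNReal, LipschitzWith K g)
    (hg_sign : ∀ x : ℝ, x ≠ 0 → 0 < x * g x)
    (hfodd_nonneg : ∀ l ∈ Finset.Icc 1 N, ∀ x : ℝ, 0 ≤ fodd l x)
    (hf1_pos : ∀ x : ℝ, x ≠ 0 → 0 < fodd 1 x) :
    ¬ ∃ (u v : ℝ → ℝ) (T : ℝ), 0 < T ∧
      (∀ t : ℝ, HasDerivAt u (v t) t) ∧
      (∀ t : ℝ, HasDerivAt v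
        (-(∑ l ∈ Finset.Icc 1 N, fodd l (u t) * v t ^ (2 * l - 1))
          - (∑ l ∈ Finset.Icc 1 M, feven l (u t) * v t ^ (2 * l)) - g (u t)) t) ∧
      (∀ t : ℝ, u (t + T) = u t ∧ v (t + T) = v t) ∧
      (∃ t₁ t₂ : ℝ, (u t₁, v t₁) ≠ (u t₂, v t₂)) := by
  rintro ⟨u, v, T, hT, hu, hv, hper, t₁, t₂, hne⟩
  obtain ⟨K, hg_lip⟩ := hg_lip
  have hucont : Continuous u := by
    rw [continuous_iff_continuousAt]; exact fun t => (hu t).continuousAt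
  have hvcont : Continuous v := by
    rw [continuous_iff_continuousAt]; exact fun t => (hv t).continuousAt
  have hg0 : g 0 = 0 := g_zero hg_lip.continuous hg_sign
  -- the orbit never passes through the origin
  have horigin : ∀ t, ¬ (u t = 0 ∧ v t = 0) := by
    rintro t ⟨h0u, h0v⟩
    have hconst := origin_const hfodd_cont hfeven_cont hg_lip hg0 hu hv h0u h0v
    apply hne
    rw [(hconst t₁).1, (hconst t₁).2, (hconst t₂).1, (hconst t₂).2]
  -- periodicity for all integer multiples
  have hperu : ∀ t, u (t + T) = u t := fun t => (hper t).1
  have hperv : ∀ t, v (t + T) = v t := fun t => (hper t).2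
  have hperu' : ∀ t, u (t - T) = u t := by
    intro t
    have := hperu (t - T)
    rw [show t - T + T = t by ring] at this
    exact this.symm
  have hperv' : ∀ t, v (t - T) = v t := by
    intro t
    have := hperv (t - T)
    rw [show t - T + T = t by ring] at this
    exact this.symm
  -- global maximum of u
  obtain ⟨tc, htc_mem, htc⟩ := (isCompact_Icc (a := (0:ℝ)) (b := T)).exists_isMaxOn
    (nonempty_Icc.2 hT.le) hucont.continuousOn
  have hmax : ∀ s, u s ≤ u tc := by
    intro s
    obtain ⟨y, hy, hys⟩ := Function.Periodic.exists_mem_Ico₀ (hperu : Function.Periodic u T) hT s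
    rw [hys]
    exact htc ⟨hy.1, hy.2.le⟩
  have hvtc : v tc = 0 := by
    have hlocmax : IsLocalMax u tc := Filter.Eventually.of_forall hmax
    exact hlocmax.hasDerivAt_eq_zero (hu tc)
  -- the derivative of v at a zero of v
  have hzero_deriv : ∀ τ, v τ = 0 → HasDerivAt v (-g (u τ)) τ := by
    intro τ hτ
    have h1 := hv τ
    have h2 : (∑ l ∈ Finset.Icc 1 N, fodd l (u τ) * v τ ^ (2 * l - 1)) = 0 := by
      apply Finset.sum_eq_zero
      intro l hl
      have : 1 ≤ l := (Finset.mem_Icc.1 hl).1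
      rw [hτ, zero_pow (by omega : 2 * l - 1 ≠ 0), mul_zero]
    have h3 : (∑ l ∈ Finset.Icc 1 M, feven l (u τ) * v τ ^ (2 * l)) = 0 := by
      apply Finset.sum_eq_zero
      intro l hl
      have : 1 ≤ l := (Finset.mem_Icc.1 hl).1
      rw [hτ, zero_pow (by omega : 2 * l ≠ 0), mul_zero]
    rw [h2, h3] at h1
    convert h1 using 1
    ring
  have hgne : ∀ τ, v τ = 0 → g (u τ) ≠ 0 := by
    intro τ hτ hg'
    have hune : u τ ≠ 0 := fun h => horigin τ ⟨h, hτ⟩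
    have := hg_sign (u τ) hune
    rw [hg'] at this
    norm_num at this
  have hisol : ∀ τ, v τ = 0 → ∃ ε > 0, ∀ s, s ≠ τ → |s - τ| < ε →
      0 < v s / (s - τ) * (-g (u τ)) := by
    intro τ hτ
    exact sign_near_zero (hzero_deriv τ hτ) hτ (neg_ne_zero.2 (hgne τ hτ))
  -- next zero of v after a given zero
  set nxt : ℝ → ℝ := fun τ => sInf {s | v s = 0 ∧ τ < s} with hnxtdef
  have hnxt : ∀ τ, v τ = 0 →
      τ < nxt τ ∧ v (nxt τ) = 0 ∧ ∀ s, τ < s → s < nxt τ → v s ≠ 0 := by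
    intro τ hτ
    obtain ⟨ε, hε, hsign⟩ := hisol τ hτ
    set S : Set ℝ := {s | v s = 0 ∧ τ < s} with hS
    have hSne : S.Nonempty := by
      refine ⟨τ + T, ?_, by linarith⟩
      rw [hperv τ, hτ]
    have hSbdd : BddBelow S := ⟨τ, fun s hs => hs.2.le⟩
    have hSlb : ∀ s ∈ S, τ + ε ≤ s := by
      intro s hs
      by_contra hcc
      push_neg at hcc
      have hne' : s ≠ τ := ne_of_gt hs.2
      have habs : |s - τ| < ε := by
        rw [abs_lt]; constructor <;> [linarith [hs.2]; linarith]
      have := hsign s hne' habs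
      rw [hs.1] at this
      norm_num at this
    have hinf_lb : τ + ε ≤ nxt τ := le_csInf hSne hSlb
    have hmem : nxt τ ∈ closure S := csInf_mem_closure hSne hSbdd
    have hclosed : IsClosed {s : ℝ | v s = 0} := isClosed_eq hvcont continuous_const
    have hvnxt : v (nxt τ) = 0 := by
      have hsub2 : closure S ⊆ {s : ℝ | v s = 0} := by
        apply closure_minimal _ hclosed
        exact fun s hs => hs.1
      exact hsub2 hmem
    refine ⟨by linarith, hvnxt, ?_⟩
    intro s hs1 hs2 hvs
    have : s ∈ S := ⟨hvs, hs1⟩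
    have := csInf_le hSbdd this
    rw [← hnxtdef] at *
    linarith
  have hnxt_per : ∀ τ, v τ = 0 → nxt (τ + T) = nxt τ + T := by
    intro τ hτ
    have hτT : v (τ + T) = 0 := by rw [hperv, hτ]
    have h1 := hnxt τ hτ
    have h2 := hnxt (τ + T) hτT
    have hle1 : nxt (τ + T) ≤ nxt τ + T := by
      apply csInf_le ⟨τ + T, fun s hs => hs.2.le⟩
      constructor
      · rw [hperv, h1.2.1]
      · linarith [h1.1]
    have hle2 : nxt τ ≤ nxt (τ + T) - T := by
      apply csInf_le ⟨τ, fun s hs => hs.2.le⟩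
      constructor
      · rw [hperv', h2.2.1]
      · linarith [h2.1]
    linarith
  -- dichotomy of arc signs
  have harc_dich : ∀ τ, v τ = 0 →
      (∀ s ∈ Ioo τ (nxt τ), 0 < v s) ∨ (∀ s ∈ Ioo τ (nxt τ), v s < 0) := by
    intro τ hτ
    obtain ⟨h1, _, h3⟩ := hnxt τ hτ
    exact const_sign hvcont h1 (fun s hs => h3 s hs.1 hs.2)
  -- alternation of arc signs
  have halt_pos : ∀ τ, v τ = 0 → (∀ s ∈ Ioo τ (nxt τ), 0 < v s) →
      (∀ s ∈ Ioo (nxt τ) (nxt (nxt τ)), v s < 0) := by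
    intro τ hτ hpos
    obtain ⟨hτm, hvm, _⟩ := hnxt τ hτ
    obtain ⟨hm2, _, _⟩ := hnxt (nxt τ) hvm
    obtain ⟨ε, hε, hsign⟩ := hisol (nxt τ) hvm
    -- the derivative -g(u (nxt τ)) must be negative
    have hd : -g (u (nxt τ)) < 0 := by
      set sm : ℝ := max ((τ + nxt τ)/2) (nxt τ - ε/2) with hsmdef
      have hsm1 : τ < sm := lt_of_lt_of_le (by linarith) (le_max_left _ _)
      have hsm2 : sm < nxt τ := max_lt (by linarith) (by linarith)
      have hsm3 : |sm - nxt τ| < ε := by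
        rw [abs_lt]
        constructor
        · have : nxt τ - ε/2 ≤ sm := le_max_right _ _
          linarith
        · linarith
      have h := hsign sm (ne_of_lt hsm2) hsm3
      have hvs := hpos sm ⟨hsm1, hsm2⟩
      have hratio : v sm / (sm - nxt τ) < 0 := div_neg_of_pos_of_neg hvs (by linarith)
      nlinarith
    rcases harc_dich (nxt τ) hvm with h | h
    · exfalso
      set sp : ℝ := min ((nxt τ + nxt (nxt τ))/2) (nxt τ + ε/2) with hspdef
      have hsp1 : nxt τ < sp := lt_min (by linarith) (by linarith)
      have hsp2 : sp < nxt (nxt τ) := lt_of_le_of_lt (min_le_left _ _) (by linarith)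
      have hsp3 : |sp - nxt τ| < ε := by
        rw [abs_lt]
        constructor
        · linarith
        · have : sp ≤ nxt τ + ε/2 := min_le_right _ _
          linarith
      have h' := hsign sp (ne_of_gt hsp1) hsp3
      have hvs := h sp ⟨hsp1, hsp2⟩
      have hratio : 0 < v sp / (sp - nxt τ) := div_pos hvs (by linarith)
      nlinarith
    · exact h
  have halt_neg : ∀ τ, v τ = 0 → (∀ s ∈ Ioo τ (nxt τ), v s < 0) →
      (∀ s ∈ Ioo (nxt τ) (nxt (nxt τ)), 0 < v s) := by
    intro τ hτ hneg
    obtain ⟨hτm, hvm, _⟩ := hnxt τ hτ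
    obtain ⟨hm2, _, _⟩ := hnxt (nxt τ) hvm
    obtain ⟨ε, hε, hsign⟩ := hisol (nxt τ) hvm
    have hd : 0 < -g (u (nxt τ)) := by
      set sm : ℝ := max ((τ + nxt τ)/2) (nxt τ - ε/2) with hsmdef
      have hsm1 : τ < sm := lt_of_lt_of_le (by linarith) (le_max_left _ _)
      have hsm2 : sm < nxt τ := max_lt (by linarith) (by linarith)
      have hsm3 : |sm - nxt τ| < ε := by
        rw [abs_lt]
        constructor
        · have : nxt τ - ε/2 ≤ sm := le_max_right _ _
          linarith
        · linarith
      have h := hsign sm (ne_of_lt hsm2) hsm3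
      have hvs := hneg sm ⟨hsm1, hsm2⟩
      have hratio : 0 < v sm / (sm - nxt τ) := div_pos_of_neg_of_neg hvs (by linarith)
      nlinarith
    rcases harc_dich (nxt τ) hvm with h | h
    · exact h
    · exfalso
      set sp : ℝ := min ((nxt τ + nxt (nxt τ))/2) (nxt τ + ε/2) with hspdef
      have hsp1 : nxt τ < sp := lt_min (by linarith) (by linarith)
      have hsp2 : sp < nxt (nxt τ) := lt_of_le_of_lt (min_le_left _ _) (by linarith)
      have hsp3 : |sp - nxt τ| < ε := by
        rw [abs_lt]
        constructor
        · linarith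
        · have : sp ≤ nxt τ + ε/2 := min_le_right _ _
          linarith
      have h' := hsign sp (ne_of_gt hsp1) hsp3
      have hvs := h sp ⟨hsp1, hsp2⟩
      have hratio : v sp / (sp - nxt τ) < 0 := div_neg_of_neg_of_pos hvs (by linarith)
      nlinarith
  -- the first arc after the global max is negative
  have hfirst : ∀ s ∈ Ioo tc (nxt tc), v s < 0 := by
    rcases harc_dich tc hvtc with h | h
    · exfalso
      have := arc_mono hu (hnxt tc hvtc).1 h
      exact absurd this (not_lt.2 (hmax (nxt tc)))
    · exact h
  -- the key decreasing step: down-arc then up-arc strictly decreases the turning value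
  have hstep : ∀ τ, v τ = 0 → (∀ s ∈ Ioo τ (nxt τ), v s < 0) →
      u (nxt (nxt τ)) < u τ ∧ (∀ s ∈ Ioo (nxt (nxt τ)) (nxt (nxt (nxt τ))), v s < 0) := by
    intro τ hτ hneg
    obtain ⟨hlt1, hz2, hmin1⟩ := hnxt τ hτ
    obtain ⟨hlt2, hz3, hmin2⟩ := hnxt (nxt τ) hz2
    have hpos2 : ∀ s ∈ Ioo (nxt τ) (nxt (nxt τ)), 0 < v s := halt_neg τ hτ hneg
    have hneg3 : ∀ s ∈ Ioo (nxt (nxt τ)) (nxt (nxt (nxt τ))), v s < 0 :=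
      halt_pos (nxt τ) hz2 hpos2
    refine ⟨?_, hneg3⟩
    -- the up-arc on [nxt τ, nxt (nxt τ)] : σ = 1
    have hv1 : ∀ t, HasDerivAt v
        (-(1:ℝ) * (∑ l ∈ Finset.Icc 1 N, fodd l (u t) * v t ^ (2*l-1))
          - (∑ l ∈ Finset.Icc 1 M, feven l (u t) * v t ^ (2*l)) - g (u t)) t := by
      intro t; rw [neg_one_mul]; exact hv t
    obtain ⟨hur2, Y₂, hY₂c, hY₂z, hY₂r, hY₂pos, hY₂d⟩ :=
      arc_lemma (σ := 1) hu hv1 hlt2 hz2 hz3 hpos2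
    -- the down-arc on [τ, nxt τ], reflected : σ = -1
    have hutd : ∀ t, HasDerivAt (fun t => u (τ + nxt τ - t)) (-v (τ + nxt τ - t)) t := by
      intro t
      have h1 : HasDerivAt (fun t : ℝ => τ + nxt τ - t) (-1) t :=
        (hasDerivAt_id t).const_sub (τ + nxt τ)
      have h2 := (hu (τ + nxt τ - t)).comp t h1
      simp only [Function.comp_def] at h2
      refine h2.congr_deriv ?_
      symm
      ring
    have hvtd : ∀ t, HasDerivAt (fun t => -v (τ + nxt τ - t))
        (-(-1:ℝ) * (∑ l ∈ Finset.Icc 1 N, fodd l (u (τ + nxt τ - t)) * (-v (τ + nxt τ - t)) ^ (2*l-1))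
          - (∑ l ∈ Finset.Icc 1 M, feven l (u (τ + nxt τ - t)) * (-v (τ + nxt τ - t)) ^ (2*l))
          - g (u (τ + nxt τ - t))) t := by
      intro t
      have h1 : HasDerivAt (fun t : ℝ => τ + nxt τ - t) (-1) t :=
        (hasDerivAt_id t).const_sub (τ + nxt τ)
      have h2 := ((hv (τ + nxt τ - t)).comp t h1).neg
      simp only [Function.comp_def] at h2
      refine h2.congr_deriv ?_
      symm
      have hoddeq : (∑ l ∈ Finset.Icc 1 N, fodd l (u (τ + nxt τ - t)) * v (τ + nxt τ - t) ^ (2*l-1))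
          = - (∑ l ∈ Finset.Icc 1 N, fodd l (u (τ + nxt τ - t)) * (-v (τ + nxt τ - t)) ^ (2*l-1)) := by
        rw [← Finset.sum_neg_distrib]
        apply Finset.sum_congr rfl
        intro l hl
        have hl1 : 1 ≤ l := (Finset.mem_Icc.1 hl).1
        have hodd : Odd (2*l-1) := ⟨l-1, by omega⟩
        rw [hodd.neg_pow]
        ring
      have heveneq : (∑ l ∈ Finset.Icc 1 M, feven l (u (τ + nxt τ - t)) * v (τ + nxt τ - t) ^ (2*l))
          = ∑ l ∈ Finset.Icc 1 M, feven l (u (τ + nxt τ - t)) * (-v (τ + nxt τ - t)) ^ (2*l) := by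
        apply Finset.sum_congr rfl
        intro l hl
        rw [(even_two_mul l).neg_pow]
      rw [heveneq, hoddeq]
      ring
    have hva' : -v (τ + nxt τ - τ) = 0 := by
      rw [show τ + nxt τ - τ = nxt τ by ring, hz2, neg_zero]
    have hvb' : -v (τ + nxt τ - nxt τ) = 0 := by
      rw [show τ + nxt τ - nxt τ = τ by ring, hτ, neg_zero]
    have hpos' : ∀ s ∈ Ioo τ (nxt τ), 0 < -v (τ + nxt τ - s) := by
      intro s hs
      have : τ + nxt τ - s ∈ Ioo τ (nxt τ) := ⟨by linarith [hs.2], by linarith [hs.1]⟩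
      linarith [hneg _ this]
    obtain ⟨hur1, Y₁, hY₁c, hY₁z, hY₁r, hY₁pos, hY₁d⟩ :=
      arc_lemma (σ := -1) hutd hvtd hlt1 hva' hvb' hpos'
    have e1 : τ + nxt τ - τ = nxt τ := by ring
    have e2 : τ + nxt τ - nxt τ = τ := by ring
    simp only [e1, e2] at hur1 hY₁c hY₁z hY₁r hY₁pos hY₁d
    -- apply the comparison lemma
    have hY₁d' : ∀ x ∈ Ioo (u (nxt τ)) (u τ), HasDerivAt Y₁
        (2*(Psum fodd N x (Y₁ x)) - 2*(Qsum feven M x (Y₁ x)) - 2*g x) x := by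
      intro x hx
      have := hY₁d x hx
      convert this using 1
      ring
    have hY₂d' : ∀ x ∈ Ioo (u (nxt τ)) (u (nxt (nxt τ))), HasDerivAt Y₂
        (-2*(Psum fodd N x (Y₂ x)) - 2*(Qsum feven M x (Y₂ x)) - 2*g x) x := by
      intro x hx
      have := hY₂d x hx
      convert this using 1
      ring
    exact comparison hN hfodd_cont hfeven_cont hfodd_nonneg hf1_pos hur1 hur2
      hY₁c hY₁z hY₁r hY₁pos hY₁d' hY₂c hY₂z hY₂r hY₂pos hY₂d'
  -- iterate the zeros of v starting from the global max
  classical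
  set e : ℕ → ℝ := fun k => nxt^[k] tc with he
  have he0 : e 0 = tc := by rw [he]; rfl
  have hesucc : ∀ k, e (k+1) = nxt (e k) := by
    intro k; rw [he]; exact Function.iterate_succ_apply' _ _ _
  have hez : ∀ k, v (e k) = 0 := by
    intro k
    induction k with
    | zero => rw [he0]; exact hvtc
    | succ k ih => rw [hesucc]; exact (hnxt (e k) ih).2.1
  have helt : ∀ k, e k < e (k+1) := by
    intro k; rw [hesucc]; exact (hnxt (e k) (hez k)).1
  have hemono : StrictMono e := strictMono_nat_of_lt_succ helt
  -- sign pattern of the arcs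
  have hsignpat : ∀ k, (Even k → ∀ s ∈ Ioo (e k) (e (k+1)), v s < 0) ∧
      (¬ Even k → ∀ s ∈ Ioo (e k) (e (k+1)), 0 < v s) := by
    intro k
    induction k with
    | zero =>
      constructor
      · intro _
        rw [he0, hesucc 0, he0]
        exact hfirst
      · intro hcc; exact absurd Even.zero hcc
    | succ k ih =>
      by_cases hk : Even k
      · have hneg := ih.1 hk
        rw [hesucc k] at hneg
        have hpos := halt_neg (e k) (hez k) hneg
        rw [← hesucc k, ← hesucc (k+1)] at hpos
        constructor
        · intro hev
          exact absurd (Nat.even_add_one.1 hev) (not_not.2 hk)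
        · intro _; exact hpos
      · have hpos := ih.2 hk
        rw [hesucc k] at hpos
        have hneg := halt_pos (e k) (hez k) hpos
        rw [← hesucc k, ← hesucc (k+1)] at hneg
        constructor
        · intro _; exact hneg
        · intro hcc
          exact absurd (Nat.even_add_one.2 hk) hcc
  -- strict decrease along every second zero
  have hdec : ∀ k, Even k → u (e (k+2)) < u (e k) := by
    intro k hk
    have hneg := (hsignpat k).1 hk
    rw [hesucc k] at hneg
    have hres := (hstep (e k) (hez k) hneg).1
    have hrw : nxt (nxt (e k)) = e (k+2) := by
      rw [hesucc (k+1), hesucc k]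
    rw [hrw] at hres
    exact hres
  have hchain : ∀ k, u (e (2*(k+1))) < u (e 0) := by
    intro k
    induction k with
    | zero => simpa using hdec 0 Even.zero
    | succ k ih =>
      have h2 := hdec (2*(k+1)) (even_two_mul _)
      have hidx : 2*(k+1+1) = 2*(k+1) + 2 := by ring
      rw [hidx]
      exact lt_trans h2 ih
  -- the sequence of zeros reaches tc + T exactly
  have hTz : v (tc + T) = 0 := by rw [hperv, hvtc]
  have hex : ∃ j, tc + T ≤ e j := by
    by_contra hcc
    push_neg at hcc
    have hbdd : BddAbove (Set.range e) := ⟨tc + T, by rintro y ⟨j, rfl⟩; exact (hcc j).le⟩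
    have htend := tendsto_atTop_ciSup hemono.monotone hbdd
    set ζ : ℝ := ⨆ j, e j with hζ
    have hvζ : v ζ = 0 := by
      have h1 : Tendsto (fun j => v (e j)) atTop (nhds (v ζ)) := (hvcont.tendsto ζ).comp htend
      have h2 : (fun j => v (e j)) = fun _ => (0:ℝ) := funext hez
      rw [h2] at h1
      exact tendsto_nhds_unique h1 tendsto_const_nhds
    obtain ⟨ε, hε, hsign⟩ := hisol ζ hvζ
    have hltζ : ∀ j, e j < ζ := fun j => lt_of_lt_of_le (helt j) (le_ciSup hbdd (j+1))
    have hev : ∀ᶠ j in atTop, e j ∈ Ioi (ζ - ε) := htend (Ioi_mem_nhds (by linarith))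
    obtain ⟨j, hj⟩ := hev.exists
    have habs : |e j - ζ| < ε := by
      rw [abs_lt]
      constructor
      · have : ζ - ε < e j := hj
        linarith
      · linarith [hltζ j]
    have := hsign (e j) (ne_of_lt (hltζ j)) habs
    rw [hez j] at this
    norm_num at this
  set j := Nat.find hex with hjdef
  have hj : tc + T ≤ e j := Nat.find_spec hex
  have hjmin : ∀ i, i < j → ¬ (tc + T ≤ e i) := fun i hi => Nat.find_min hex hi
  have hj0 : j ≠ 0 := by
    intro h
    rw [h, he0] at hj
    linarith
  obtain ⟨i, hi⟩ : ∃ i, j = i + 1 := ⟨j - 1, by omega⟩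
  have hei : e i < tc + T := not_le.1 (hjmin i (by omega))
  have heeq : e (i+1) = tc + T := by
    rcases eq_or_lt_of_le hj with h | h
    · rw [← hi]; exact h.symm
    · exfalso
      rw [hi] at h
      have hmin := (hnxt (e i) (hez i)).2.2 (tc + T) hei (by rw [← hesucc i]; exact h)
      exact hmin hTz
  -- the arc after e (i+1) = tc + T is negative, by periodicity of the first arc
  have harcT : ∀ s ∈ Ioo (e (i+1)) (e (i+2)), v s < 0 := by
    intro s hs
    have hnp : nxt (tc + T) = nxt tc + T := hnxt_per tc hvtc
    have hs1 : tc + T < s := by rw [← heeq]; exact hs.1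
    have hs2 : s < nxt tc + T := by
      rw [← hnp, ← heeq, ← hesucc (i+1)]
      exact hs.2
    have hs' : s - T ∈ Ioo tc (nxt tc) := ⟨by linarith, by linarith⟩
    have := hfirst (s - T) hs'
    rw [hperv' s] at this
    exact this
  have hjeven : Even (i+1) := by
    by_contra hodd
    have hpos := (hsignpat (i+1)).2 hodd
    have hne' : e (i+1) < e (i+2) := helt (i+1)
    have hsmem : (e (i+1) + e (i+2))/2 ∈ Ioo (e (i+1)) (e (i+2)) := ⟨by linarith, by linarith⟩
    linarith [hpos _ hsmem, harcT _ hsmem]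
  obtain ⟨k₀, hk₀⟩ := hjeven
  have hk₀1 : 1 ≤ k₀ := by omega
  have hval : u (e (i+1)) = u (e 0) := by
    rw [heeq, he0]
    exact hperu tc
  have hidx2 : 2*((k₀ - 1)+1) = i + 1 := by omega
  have := hchain (k₀ - 1)
  rw [hidx2, hval] at this
  exact lt_irrefl _ this
end

section
/- Let f_1, f_2 : ℝ → ℝ be continuous and let g : ℝ → ℝ be Lipschitz with x·g(x) > 0 for all x ≠ 0. If f_1(x) > 0 for all x ∈ ℝ, then the planar system u' = v, v' = -f_1(u) v - f_2(u) v² - g(u) has no nonconstant periodic solution. -/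
/-- **Non-existence, two-term case.** If `f₁ > 0` everywhere, the system
`u' = v`, `v' = -f₁(u) v - f₂(u) v² - g(u)` has no nonconstant periodic
solution. -/
theorem nonexistence_two_terms (f₁ f₂ g : ℝ → ℝ)
    (hf₁_cont : Continuous f₁) (hf₂_cont : Continuous f₂)
    (hg_lip : ∃ K : NNReal, LipschitzWith K g)
    (hg_sign : ∀ x : ℝ, x ≠ 0 → 0 < x * g x)
    (hf₁_pos : ∀ x : ℝ, 0 < f₁ x) :
    ¬ ∃ (u v : ℝ → ℝ) (T : ℝ), 0 < T ∧
      (∀ t : ℝ, HasDerivAt u (v t) t) ∧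
      (∀ t : ℝ, HasDerivAt v
        (-(f₁ (u t) * v t) - f₂ (u t) * v t ^ 2 - g (u t)) t) ∧
      (∀ t : ℝ, u (t + T) = u t ∧ v (t + T) = v t) ∧
      (∃ t₁ t₂ : ℝ, (u t₁, v t₁) ≠ (u t₂, v t₂)) := by
  rintro ⟨u, v, T, hT, hu, hv, hper, t₁, t₂, hne⟩
  obtain ⟨K, hK⟩ := hg_lip
  have hg_cont : Continuous g := hK.continuous
  -- F x = ∫₀ˣ f₂
  set F : ℝ → ℝ := fun x => ∫ s in (0:ℝ)..x, f₂ s with hFdef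
  have hF_deriv : ∀ x, HasDerivAt F (f₂ x) x := fun x =>
    intervalIntegral.integral_hasDerivAt_right (hf₂_cont.intervalIntegrable _ _)
      (hf₂_cont.stronglyMeasurableAtFilter _ _) hf₂_cont.continuousAt
  have hF_diff : Differentiable ℝ F := fun x => (hF_deriv x).differentiableAt
  have hF_cont : Continuous F := hF_diff.continuous
  -- integrand of the potential
  set h : ℝ → ℝ := fun x => Real.exp (F x) ^ 2 * g x with hhdef
  have hh_cont : Continuous h := ((hF_cont.rexp).pow 2).mul hg_cont
  set G : ℝ → ℝ := fun x => ∫ s in (0:ℝ)..x, h s with hGdef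
  have hG_deriv : ∀ x, HasDerivAt G (h x) x := fun x =>
    intervalIntegral.integral_hasDerivAt_right (hh_cont.intervalIntegrable _ _)
      (hh_cont.stronglyMeasurableAtFilter _ _) hh_cont.continuousAt
  -- w = v * exp (F ∘ u)
  set w : ℝ → ℝ := fun t => v t * Real.exp (F (u t)) with hwdef
  have hw_deriv : ∀ t, HasDerivAt w
      ((-(f₁ (u t) * v t) - f₂ (u t) * v t ^ 2 - g (u t)) * Real.exp (F (u t))
        + v t * (Real.exp (F (u t)) * (f₂ (u t) * v t))) t := by
    intro t
    have hE : HasDerivAt (fun t => Real.exp (F (u t)))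
        (Real.exp (F (u t)) * (f₂ (u t) * v t)) t := by
      have := ((hF_deriv (u t)).comp t (hu t)).exp
      simpa [mul_assoc] using this
    exact (hv t).mul hE
  -- Lyapunov function
  set J : ℝ → ℝ := fun t => w t ^ 2 / 2 + G (u t) with hJdef
  have hJ_deriv : ∀ t, HasDerivAt J
      (-(f₁ (u t) * Real.exp (F (u t)) ^ 2 * v t ^ 2)) t := by
    intro t
    have h1 := (((hw_deriv t).pow 2).div_const 2).add ((hG_deriv (u t)).comp t (hu t))
    have h2 : HasDerivAt J _ t := h1
    convert h2 using 1
    simp only [hwdef, hhdef]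
    push_cast
    ring
  have hJ_anti : Antitone J := by
    apply antitone_of_deriv_nonpos
    · exact fun t => (hJ_deriv t).differentiableAt
    · intro t
      rw [(hJ_deriv t).deriv]
      have h1 := hf₁_pos (u t)
      have h2 := mul_nonneg (mul_nonneg h1.le (sq_nonneg (Real.exp (F (u t))))) (sq_nonneg (v t))
      linarith
  have hJ_per : ∀ t, J (t + T) = J t := by
    intro t
    simp only [hJdef, hwdef, (hper t).1, (hper t).2]
  have hJ_per_n : ∀ n : ℕ, ∀ t, J (t + n * T) = J t := by
    intro n
    induction n with
    | zero => simp
    | succ k ih =>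
      intro t
      have : t + (k + 1 : ℕ) * T = (t + k * T) + T := by push_cast; ring
      rw [this, hJ_per, ih]
  have hJ_const : ∀ s t : ℝ, s ≤ t → J s = J t := by
    intro s t hst
    obtain ⟨n, hn⟩ := exists_nat_ge ((t - s) / T)
    have hle : t ≤ s + n * T := by
      have := (div_le_iff₀ hT).mp hn
      linarith
    have h1 : J (s + n * T) ≤ J t := hJ_anti hle
    rw [hJ_per_n n s] at h1
    exact le_antisymm h1 (hJ_anti hst)
  have hJ_eq : ∀ t, J t = J 0 := by
    intro t
    rcases le_total t 0 with h' | h'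
    · exact hJ_const t 0 h'
    · exact (hJ_const 0 t h').symm
  have hv0 : ∀ t, v t = 0 := by
    intro t
    have hD0 : deriv J t = 0 := by
      have : J = fun _ => J 0 := funext hJ_eq
      rw [this]
      simp
    rw [(hJ_deriv t).deriv] at hD0
    have hA : (0:ℝ) < f₁ (u t) * Real.exp (F (u t)) ^ 2 :=
      mul_pos (hf₁_pos (u t)) (pow_pos (Real.exp_pos _) 2)
    have : f₁ (u t) * Real.exp (F (u t)) ^ 2 * v t ^ 2 = 0 := by linarith
    rcases mul_eq_zero.mp this with h' | h'
    · exact absurd h' hA.ne'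
    · exact pow_eq_zero_iff (by norm_num) |>.mp h'
  have hu0 : ∀ t, HasDerivAt u 0 t := fun t => hv0 t ▸ hu t
  have huconst : u t₁ = u t₂ := by
    have hdiff : Differentiable ℝ u := fun t => (hu0 t).differentiableAt
    exact is_const_of_deriv_eq_zero hdiff (fun t => (hu0 t).deriv) t₁ t₂
  exact hne (by rw [huconst, hv0 t₁, hv0 t₂])
end

section
/- Let N ≥ 1, let f_1 : ℝ → ℝ be continuous with f_1(x) < 0 for |x| < δ for some δ > 0, and let f_3, …, f_{2N+1} : ℝ → ℝ be continuous with f_{2l+1}(x) ≥ 0 for all x and all l ∈ {1,…,N}. Then there exists r₀ ∈ (0, δ) such that for every (x, y) with 0 < x² + y² ≤ r₀² the inner product of the vector field X(x,y) = (y, -∑_{l=0}^{N} f_{2l+1}(x) y^{2l+1} - x) with the outward radial vector (x, y) satisfies ⟨(x,y), X(x,y)⟩ = -y² ( f_1(x) + ∑_{l=1}^{N} f_{2l+1}(x) y^{2l} ) ≥ 0, with strict inequality whenever y ≠ 0. In particular the flow crosses every circle x² + y² = r², 0 < r ≤ r₀, outward, so the origin is a repellor. -/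
/-- **Inner-boundary estimate.** Near the origin, the vector field
`X(x,y) = (y, -∑_{l=0}^N f_{2l+1}(x) y^(2l+1) - x)` points outward across
small circles: its inner product with the outward radial vector `(x, y)`
equals `-y²·(f₁(x) + ∑_{l=1}^N f_{2l+1}(x) y^(2l))`, is nonnegative on a
punctured disc of radius `r₀ < δ`, and is positive there when `y ≠ 0`.
Here `f l` denotes `f_{2l+1}`. -/
theorem massera_origin_repellor (N : ℕ) (hN : 1 ≤ N)
    (f : ℕ → ℝ → ℝ)
    (hcont : ∀ l ≤ N, Continuous (f l))
    (δ : ℝ) (hδ : 0 < δ)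
    (hf1 : ∀ x : ℝ, |x| < δ → f 0 x < 0)
    (hpos : ∀ l, 1 ≤ l → l ≤ N → ∀ x : ℝ, 0 ≤ f l x) :
    ∃ r₀ : ℝ, 0 < r₀ ∧ r₀ < δ ∧
      ∀ x y : ℝ,
        (x * y + y * (-(∑ l ∈ Finset.range (N + 1), f l x * y ^ (2 * l + 1)) - x)
          = -(y ^ 2) * (f 0 x + ∑ l ∈ Finset.Icc 1 N, f l x * y ^ (2 * l))) ∧
        (0 < x ^ 2 + y ^ 2 → x ^ 2 + y ^ 2 ≤ r₀ ^ 2 →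
          0 ≤ x * y + y * (-(∑ l ∈ Finset.range (N + 1), f l x * y ^ (2 * l + 1)) - x) ∧
          (y ≠ 0 →
            0 < x * y + y * (-(∑ l ∈ Finset.range (N + 1), f l x * y ^ (2 * l + 1)) - x))) := by
  have hEq : ∀ x y : ℝ,
      x * y + y * (-(∑ l ∈ Finset.range (N + 1), f l x * y ^ (2 * l + 1)) - x)
        = -(y ^ 2) * (f 0 x + ∑ l ∈ Finset.Icc 1 N, f l x * y ^ (2 * l)) := by
    intro x y
    rw [Finset.sum_range_succ', ← Finset.Ico_add_one_right_eq_Icc, Finset.sum_Ico_eq_sum_range]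
    have key : y * ∑ l ∈ Finset.range N, f (l + 1) x * y ^ (2 * (l + 1) + 1)
        = y ^ 2 * ∑ l ∈ Finset.range N, f (1 + l) x * y ^ (2 * (1 + l)) := by
      rw [Finset.mul_sum, Finset.mul_sum]
      refine Finset.sum_congr rfl fun i _ => ?_
      rw [Nat.add_comm 1 i]; ring
    simp only [Nat.add_sub_cancel]
    linear_combination -key
  set F : ℝ × ℝ → ℝ := fun p => f 0 p.1 + ∑ l ∈ Finset.Icc 1 N, f l p.1 * p.2 ^ (2 * l)
    with hFdef
  have hFc : Continuous F := by
    apply Continuous.add ((hcont 0 (Nat.zero_le N)).comp continuous_fst)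
    apply continuous_finset_sum
    intro l hl
    exact ((hcont l (Finset.mem_Icc.mp hl).2).comp continuous_fst).mul (continuous_snd.pow _)
  have hO : IsOpen {p : ℝ × ℝ | F p < 0} := isOpen_lt hFc continuous_const
  have h00 : ((0 : ℝ), (0 : ℝ)) ∈ {p : ℝ × ℝ | F p < 0} := by
    have h1 : f 0 0 < 0 := hf1 0 (by simpa using hδ)
    have hsum : ∑ l ∈ Finset.Icc 1 N, f l 0 * (0 : ℝ) ^ (2 * l) = 0 := by
      apply Finset.sum_eq_zero; intro l hl
      have h2 : 2 * l ≠ 0 := by have := (Finset.mem_Icc.mp hl).1; omega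
      simp [zero_pow h2]
    simp only [Set.mem_setOf_eq, hFdef, hsum, add_zero]
    exact h1
  obtain ⟨ε, hε, hball⟩ := Metric.isOpen_iff.mp hO _ h00
  refine ⟨min (ε / 2) (δ / 2), by positivity, ?_, ?_⟩
  · calc min (ε / 2) (δ / 2) ≤ δ / 2 := min_le_right _ _
      _ < δ := by linarith
  intro x y
  refine ⟨hEq x y, ?_⟩
  intro _ hle
  set r₀ := min (ε / 2) (δ / 2) with hr₀
  have hr₀pos : 0 < r₀ := by positivity
  have hxr : |x| ≤ r₀ := by
    have hx2 : x ^ 2 ≤ r₀ ^ 2 := by nlinarith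
    calc |x| = Real.sqrt (x ^ 2) := (Real.sqrt_sq_eq_abs x).symm
      _ ≤ Real.sqrt (r₀ ^ 2) := Real.sqrt_le_sqrt hx2
      _ = r₀ := Real.sqrt_sq hr₀pos.le
  have hyr : |y| ≤ r₀ := by
    have hy2 : y ^ 2 ≤ r₀ ^ 2 := by nlinarith
    calc |y| = Real.sqrt (y ^ 2) := (Real.sqrt_sq_eq_abs y).symm
      _ ≤ Real.sqrt (r₀ ^ 2) := Real.sqrt_le_sqrt hy2
      _ = r₀ := Real.sqrt_sq hr₀pos.le
  have hmem : ((x, y) : ℝ × ℝ) ∈ Metric.ball ((0 : ℝ), (0 : ℝ)) ε := by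
    rw [Metric.mem_ball, Prod.dist_eq]
    have hrε : r₀ < ε := lt_of_le_of_lt (min_le_left _ _) (by linarith)
    simp only [Real.dist_eq, sub_zero]
    exact max_lt (lt_of_le_of_lt hxr hrε) (lt_of_le_of_lt hyr hrε)
  have hFneg : F (x, y) < 0 := hball hmem
  rw [hEq x y]
  have hFval : F (x, y) = f 0 x + ∑ l ∈ Finset.Icc 1 N, f l x * y ^ (2 * l) := rfl
  rw [hFval] at hFneg
  constructor
  · nlinarith [sq_nonneg y]
  · intro hy
    have hy2 : 0 < y ^ 2 := by positivity
    nlinarith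
end

section
/- The planar system x' = y, y' = -(x² - 1) e^{-x²} y - x has no nonconstant periodic solution. -/
noncomputable def msG (x : ℝ) : ℝ := ∫ s in (0:ℝ)..x, Real.exp (-(s^2))

lemma msG_hasDerivAt (x : ℝ) : HasDerivAt msG (Real.exp (-(x^2))) x := by
  have hc : Continuous (fun s : ℝ => Real.exp (-(s^2))) := by continuity
  exact intervalIntegral.integral_hasDerivAt_right (hc.intervalIntegrable 0 x)
    hc.aestronglyMeasurable.stronglyMeasurableAtFilter hc.continuousAt

lemma msG_sign (x : ℝ) : 0 ≤ x * msG x := by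
  rcases le_or_gt 0 x with h | h
  · exact mul_nonneg h (intervalIntegral.integral_nonneg h
      (fun s _ => (Real.exp_pos _).le))
  · have h2 : msG x ≤ 0 := by
      rw [msG, intervalIntegral.integral_symm]
      simp only [neg_nonpos]
      exact intervalIntegral.integral_nonneg h.le (fun s _ => (Real.exp_pos _).le)
    nlinarith [mul_nonneg (neg_nonneg.2 h.le) (neg_nonneg.2 h2)]

noncomputable def msF (u : ℝ) : ℝ := -(u * Real.exp (-(u^2)) + msG u)/2

lemma msF_hasDerivAt (u : ℝ) :
    HasDerivAt msF ((u^2 - 1) * Real.exp (-(u^2))) u := by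
  have hsq : HasDerivAt (fun u : ℝ => -(u^2)) (-(2*u)) u := by
    simpa using (hasDerivAt_pow 2 u).fun_neg
  have he : HasDerivAt (fun u : ℝ => Real.exp (-(u^2)))
      (Real.exp (-(u^2)) * (-(2*u))) u := hsq.exp
  have h1 : HasDerivAt (fun u : ℝ => u * Real.exp (-(u^2)))
      ((1 - 2*u^2) * Real.exp (-(u^2))) u := by
    have := (hasDerivAt_id u).fun_mul he
    refine this.congr_deriv ?_
    simp only [id]
    ring
  have := ((h1.fun_add (msG_hasDerivAt u)).fun_neg).div_const 2
  refine this.congr_deriv ?_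
  ring

/-- The classical Massera system with `f₁(x) = (x² - 1)·e^(-x²)`, i.e.
`x' = y`, `y' = -(x² - 1)·e^(-x²)·y - x`, has no nonconstant periodic
solution. -/
theorem massera_example_no_periodic :
    ¬ ∃ (x y : ℝ → ℝ) (T : ℝ), 0 < T ∧
      (∀ t : ℝ, HasDerivAt x (y t) t) ∧
      (∀ t : ℝ, HasDerivAt y
        (-((x t ^ 2 - 1) * Real.exp (-(x t ^ 2))) * y t - x t) t) ∧
      (∀ t : ℝ, x (t + T) = x t ∧ y (t + T) = y t) ∧
      (∃ t₁ t₂ : ℝ, (x t₁, y t₁) ≠ (x t₂, y t₂)) := by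
  rintro ⟨x, y, T, hT, hx, hy, hper, t₁, t₂, hne⟩
  -- Liénard-plane second coordinate and its derivative
  have hv : ∀ t : ℝ, HasDerivAt (fun t => y t + msF (x t)) (-(x t)) t := by
    intro t
    have := (hy t).fun_add (((msF_hasDerivAt (x t)).comp t (hx t)))
    refine this.congr_deriv ?_
    ring
  -- the energy function and its derivative
  have hV : ∀ t : ℝ,
      HasDerivAt (fun t => (x t)^2 + (y t + msF (x t))^2)
        ((x t)^2 * Real.exp (-(x t^2)) + x t * msG (x t)) t := by
    intro t
    have := ((hx t).fun_pow 2).fun_add ((hv t).fun_pow 2)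
    refine this.congr_deriv ?_
    simp only [msF]
    ring
  have hd_nonneg : ∀ t : ℝ,
      0 ≤ (x t)^2 * Real.exp (-(x t^2)) + x t * msG (x t) := by
    intro t
    have := msG_sign (x t)
    have := mul_nonneg (sq_nonneg (x t)) (Real.exp_pos (-(x t^2))).le
    linarith
  set V : ℝ → ℝ := fun t => (x t)^2 + (y t + msF (x t))^2 with hVdef
  have hmono : Monotone V :=
    monotone_of_deriv_nonneg (fun t => (hV t).differentiableAt)
      (fun t => by rw [(hV t).deriv]; exact hd_nonneg t)
  have hVper : ∀ t, V (t + T) = V t := by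
    intro t
    simp only [hVdef, (hper t).1, (hper t).2]
  have hVper' : ∀ (n : ℕ) (t : ℝ), V (t + n * T) = V t := by
    intro n
    induction n with
    | zero => intro t; simp
    | succ n ih =>
        intro t
        have h1 : t + (n + 1 : ℕ) * T = (t + T) + n * T := by push_cast; ring
        rw [h1, ih, hVper]
  have hconst : ∀ t, V t = V 0 := by
    have key : ∀ s t : ℝ, s ≤ t → V s = V t := by
      intro s t hst
      refine le_antisymm (hmono hst) ?_
      obtain ⟨n, hn⟩ := exists_nat_ge ((t - s) / T)
      have hn' : t ≤ s + n * T := by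
        have := (div_le_iff₀ hT).mp hn
        linarith
      calc V t ≤ V (s + n * T) := hmono hn'
        _ = V s := hVper' n s
    intro t
    rcases le_total t 0 with h | h
    · exact key t 0 h
    · exact (key 0 t h).symm
  -- V is constant, so its derivative vanishes
  have hx0 : ∀ t, x t = 0 := by
    intro t
    have hVfun : V = fun _ => V 0 := funext hconst
    have h0 : HasDerivAt V 0 t := by
      rw [hVfun]; exact hasDerivAt_const t (V 0)
    have heq : (x t)^2 * Real.exp (-(x t^2)) + x t * msG (x t) = 0 :=
      (hV t).unique h0
    have h1 : (x t)^2 * Real.exp (-(x t^2)) = 0 := by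
      have := msG_sign (x t)
      have := mul_nonneg (sq_nonneg (x t)) (Real.exp_pos (-(x t^2))).le
      linarith
    have h2 : (x t)^2 = 0 := by
      rcases mul_eq_zero.mp h1 with h | h
      · exact h
      · exact absurd h (Real.exp_ne_zero _)
    exact by simpa using h2
  have hy0 : ∀ t, y t = 0 := by
    intro t
    have hxfun : x = fun _ => (0 : ℝ) := funext hx0
    have h0 : HasDerivAt x 0 t := by
      rw [hxfun]; exact hasDerivAt_const t 0
    exact (hx t).unique h0
  exact hne (by simp [hx0 t₁, hx0 t₂, hy0 t₁, hy0 t₂])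
end

section
/- Let f_2 and g be real polynomials such that x·g(x) > 0 for all x ≠ 0, and suppose f_2 has odd degree and positive leading coefficient. Define g̃(x) = g(x) exp( 2 ∫₀^x f_2(r) dr ) and G̃(x) = ∫₀^x g̃(s) ds. Then G̃(x) → +∞ as x → +∞ and as x → -∞; consequently every level set of the Hamiltonian H(x,y) = y²/2 + G̃(x) is bounded and the origin is a global center of the system x' = y, y' = -g̃(x). -/
open Filter Set Metric Topology NNReal


private lemma tendsto_atTop_of_hasDerivAt_ev_ge {F f : ℝ → ℝ} (hF : ∀ x, HasDerivAt F (f x) x)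
    (hf : ∀ᶠ x in atTop, 1 ≤ f x) : Tendsto F atTop atTop := by
  obtain ⟨A, hA⟩ := eventually_atTop.mp hf
  have hw : MonotoneOn (fun u => F u - u) (Ici A) := by
    apply monotoneOn_of_deriv_nonneg (convex_Ici A)
    · exact (Continuous.sub (Differentiable.continuous (fun u : ℝ => (hF u).differentiableAt)) continuous_id).continuousOn
    · exact fun u _ => ((hF u).sub (hasDerivAt_id' (𝕜 := ℝ) (x := u))).differentiableAt.differentiableWithinAt
    · intro u hu
      rw [(show HasDerivAt (fun u => F u - u) (f u - 1) u from (hF u).sub (hasDerivAt_id' (𝕜 := ℝ) (x := u))).deriv]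
      have : 1 ≤ f u := hA u (le_of_lt (by simpa using hu))
      linarith
  apply tendsto_atTop_mono' _ (eventually_atTop.mpr ⟨A, fun x hx => ?_⟩)
    (tendsto_atTop_add_const_right _ (F A - A) tendsto_id)
  have := hw (self_mem_Ici) hx hx
  simp only [id] at this ⊢
  linarith

private lemma tendsto_atBot_of_hasDerivAt_ev_le {F f : ℝ → ℝ} (hF : ∀ x, HasDerivAt F (f x) x)
    (hf : ∀ᶠ x in atBot, f x ≤ -1) : Tendsto F atBot atTop := by
  obtain ⟨B, hB⟩ := eventually_atBot.mp hf
  have hw : AntitoneOn (fun u => F u + u) (Iic B) := by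
    apply antitoneOn_of_deriv_nonpos (convex_Iic B)
    · exact (Continuous.add (Differentiable.continuous (fun u : ℝ => (hF u).differentiableAt)) continuous_id).continuousOn
    · exact fun u _ => ((hF u).add (hasDerivAt_id' (𝕜 := ℝ) (x := u))).differentiableAt.differentiableWithinAt
    · intro u hu
      rw [(show HasDerivAt (fun u => F u + u) (f u + 1) u from (hF u).add (hasDerivAt_id' (𝕜 := ℝ) (x := u))).deriv]
      have : f u ≤ -1 := hB u (le_of_lt (by simpa using hu))
      linarith
  apply tendsto_atTop_mono' _ (eventually_atBot.mpr ⟨B, fun x hx => ?_⟩)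
    (tendsto_atTop_add_const_left _ (F B + B) tendsto_neg_atBot_atTop)
  have := hw hx self_mem_Iic hx
  simp only [id] at this ⊢
  linarith


private lemma no_forever_pos {gt G : ℝ → ℝ} (hgtc : Continuous gt)
    (hsign : ∀ u : ℝ, u ≠ 0 → 0 < u * gt u)
    (hG : ∀ u, HasDerivAt G (gt u) u) (hG0 : G 0 = 0)
    (hGtop : Tendsto G atTop atTop)
    {x y : ℝ → ℝ}
    (hx : ∀ t, HasDerivAt x (y t) t) (hy : ∀ t, HasDerivAt y (-gt (x t)) t)
    {h : ℝ} (hcons : ∀ t, y t ^ 2 / 2 + G (x t) = h)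
    {s : ℝ} (hypos : ∀ t, s ≤ t → 0 < y t) : False := by
  have hGc : Continuous G := Differentiable.continuous (fun u : ℝ => (hG u).differentiableAt)
  have hxc : Continuous x := Differentiable.continuous (fun u : ℝ => (hx u).differentiableAt)
  have hGmono : StrictMonoOn G (Ici 0) := by
    apply strictMonoOn_of_deriv_pos (convex_Ici 0) hGc.continuousOn
    intro u hu
    rw [(hG u).deriv]
    have hu0 : (0:ℝ) < u := by simpa using hu
    nlinarith [hsign u hu0.ne']
  have hGanti : StrictAntiOn G (Iic 0) := by
    apply strictAntiOn_of_deriv_neg (convex_Iic 0) hGc.continuousOn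
    intro u hu
    rw [(hG u).deriv]
    have hu0 : u < 0 := by simpa using hu
    nlinarith [hsign u hu0.ne]
  have hGnonneg : ∀ u, 0 ≤ G u := by
    intro u
    rcases le_or_gt 0 u with hu | hu
    · rcases eq_or_lt_of_le hu with rfl | hu'
      · exact le_of_eq hG0.symm
      · rw [← hG0]; exact (hGmono self_mem_Ici hu hu').le
    · rw [← hG0]; exact (hGanti hu.le self_mem_Iic hu).le
  have hGle : ∀ t, G (x t) ≤ h := by
    intro t; have := hcons t; nlinarith [sq_nonneg (y t)]
  have hpos : 0 < h := by
    have h1 := hcons s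
    have h2 := hypos s le_rfl
    nlinarith [hGnonneg (x s)]
  obtain ⟨R, hR⟩ := eventually_atTop.mp (hGtop.eventually_gt_atTop h)
  have hxR : ∀ t, x t ≤ R := by
    intro t
    by_contra hc
    exact absurd (hGle t) (not_le.mpr (hR (x t) (le_of_not_ge hc)))
  have hxmono : StrictMonoOn x (Ici s) := by
    apply strictMonoOn_of_deriv_pos (convex_Ici s) hxc.continuousOn
    intro u hu
    rw [(hx u).deriv]
    exact hypos u (le_of_lt (by simpa using hu))
  set x2 : ℝ → ℝ := fun t => x (max s t) with hx2
  have hx2mono : Monotone x2 := fun t t' htt' =>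
    hxmono.monotoneOn (mem_Ici.mpr (le_max_left _ _)) (mem_Ici.mpr (le_max_left _ _))
      (max_le_max le_rfl htt')
  have hx2bdd : BddAbove (range x2) := ⟨R, by rintro _ ⟨t, rfl⟩; exact hxR _⟩
  set L : ℝ := ⨆ t, x2 t with hL
  have hx2L : Tendsto x2 atTop (𝓝 L) := tendsto_atTop_ciSup hx2mono hx2bdd
  have hxL : Tendsto x atTop (𝓝 L) := by
    apply hx2L.congr'
    filter_upwards [eventually_ge_atTop s] with t ht
    simp [hx2, max_eq_right ht]
  have hxleL : ∀ t, s ≤ t → x t < L := by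
    intro t ht
    calc x t < x (t+1) := hxmono (mem_Ici.mpr ht) (mem_Ici.mpr (by linarith)) (by linarith)
    _ = x2 (t+1) := by simp [hx2, max_eq_right (by linarith : s ≤ t+1)]
    _ ≤ L := le_ciSup hx2bdd _
  have hGxL : Tendsto (fun t => G (x t)) atTop (𝓝 (G L)) :=
    hGc.continuousAt.tendsto.comp hxL
  have hyL : Tendsto y atTop (𝓝 (Real.sqrt (2*(h - G L)))) := by
    have h1 : Tendsto (fun t => Real.sqrt (2*(h - G (x t)))) atTop
        (𝓝 (Real.sqrt (2*(h - G L)))) :=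
      Real.continuous_sqrt.continuousAt.tendsto.comp
        ((tendsto_const_nhds.sub hGxL).const_mul 2)
    apply h1.congr'
    filter_upwards [eventually_ge_atTop s] with t ht
    have h2 : y t ^ 2 = 2*(h - G (x t)) := by have := hcons t; linarith
    rw [← h2, Real.sqrt_sq (hypos t ht).le]
  have hGLle : G L ≤ h := le_of_tendsto hGxL (Eventually.of_forall hGle)
  have hGLh : G L = h := by
    rcases eq_or_lt_of_le hGLle with he | hlt
    · exact he
    exfalso
    set m := Real.sqrt (2*(h - G L)) with hm
    have hmpos : 0 < m := Real.sqrt_pos.mpr (by linarith)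
    obtain ⟨t₂, ht₂⟩ := eventually_atTop.mp (hyL.eventually_const_le (show m/2 < m by linarith))
    have hgrow : ∀ t, t₂ ≤ t → x t₂ + m/2 * (t - t₂) ≤ x t := by
      intro t ht
      have hder : ∀ u : ℝ, HasDerivAt (fun v : ℝ => x v - m/2 * v) (y u - m/2) u :=
        fun u => (hx u).sub (by simpa using (hasDerivAt_id u).const_mul (m/2))
      have hw : MonotoneOn (fun u => x u - m/2 * u) (Ici t₂) := by
        apply monotoneOn_of_deriv_nonneg (convex_Ici t₂)
        · exact (hxc.sub (continuous_const.mul continuous_id)).continuousOn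
        · exact fun u _ => (hder u).differentiableAt.differentiableWithinAt
        · intro u hu
          rw [(hder u).deriv]
          have := ht₂ u (le_of_lt (by simpa using hu))
          linarith
      have := hw self_mem_Ici (mem_Ici.mpr ht) ht
      simp only at this
      linarith
    obtain ⟨t6, ht6a, ht6b⟩ : ∃ t6, t₂ ≤ t6 ∧ m/2 * (t6 - t₂) = R - x t₂ + 1 := by
      refine ⟨t₂ + 2*(R - x t₂ + 1)/m, ?_, by field_simp; ring⟩
      have h1 : 0 < R - x t₂ + 1 := by have := hxR t₂; linarith
      have h2 : 0 ≤ 2*(R - x t₂ + 1)/m := by positivity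
      linarith
    have h3 := hgrow t6 ht6a
    rw [ht6b] at h3
    have := hxR t6
    linarith
  have hLpos : 0 < L := by
    rcases lt_trichotomy L 0 with hL0 | hL0 | hL0
    · exfalso
      have hxs : x s < L := hxleL s le_rfl
      have := hGanti (by linarith : x s ≤ (0:ℝ)) hL0.le hxs
      have := hGle s
      linarith
    · exfalso; rw [hL0, hG0] at hGLh; linarith
    · exact hL0
  have hgtL : 0 < gt L := by nlinarith [hsign L hLpos.ne']
  have hgtxL : Tendsto (fun t => gt (x t)) atTop (𝓝 (gt L)) :=
    hgtc.continuousAt.tendsto.comp hxL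
  obtain ⟨t₃, ht₃⟩ := eventually_atTop.mp
    (hgtxL.eventually_const_le (show gt L / 2 < gt L by linarith))
  set t₄ := max s t₃ with ht₄def
  have hdecay : ∀ t, t₄ ≤ t → y t ≤ y t₄ + gt L/2 * (t₄ - t) := by
    intro t ht
    have hw : AntitoneOn (fun u => y u + gt L/2 * u) (Ici t₄) := by
      have hder : ∀ u : ℝ, HasDerivAt (fun v : ℝ => y v + gt L/2 * v) (-gt (x u) + gt L/2) u :=
        fun u => (hy u).add (by simpa using (hasDerivAt_id u).const_mul (gt L/2))
      apply antitoneOn_of_deriv_nonpos (convex_Ici t₄)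
      · exact ((Differentiable.continuous (fun u : ℝ => (hy u).differentiableAt)).add
          (continuous_const.mul continuous_id)).continuousOn
      · exact fun u _ => (hder u).differentiableAt.differentiableWithinAt
      · intro u hu
        rw [(hder u).deriv]
        have hu' : t₄ < u := by rw [ht₄def]; simpa [ht₄def] using hu
        have := ht₃ u (le_trans (le_max_right s t₃) hu'.le)
        linarith
    have := hw self_mem_Ici (mem_Ici.mpr ht) ht
    simp only at this
    linarith
  have hy4pos : 0 < y t₄ := hypos t₄ (le_max_left _ _)
  obtain ⟨t5, ht45, h7⟩ : ∃ t5, t₄ ≤ t5 ∧ gt L/2 * (t₄ - t5) = -(y t₄) - gt L/2 := by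
    refine ⟨t₄ + 2*(y t₄)/gt L + 1, ?_, by field_simp; ring⟩
    have : 0 ≤ 2*(y t₄)/gt L := by positivity
    linarith
  have h6 := hdecay t5 ht45
  rw [h7] at h6
  have := hypos t5 (le_trans (le_max_left s t₃) ht45)
  linarith

private lemma exists_y_zero {gt G : ℝ → ℝ} (hgtc : Continuous gt)
    (hsign : ∀ u : ℝ, u ≠ 0 → 0 < u * gt u)
    (hG : ∀ u, HasDerivAt G (gt u) u) (hG0 : G 0 = 0)
    (hGtop : Tendsto G atTop atTop) (hGbot : Tendsto G atBot atTop)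
    {x y : ℝ → ℝ}
    (hx : ∀ t, HasDerivAt x (y t) t) (hy : ∀ t, HasDerivAt y (-gt (x t)) t)
    {h : ℝ} (hcons : ∀ t, y t ^ 2 / 2 + G (x t) = h)
    (s : ℝ) : ∃ t, s ≤ t ∧ y t = 0 := by
  by_contra hc
  push_neg at hc
  have hyc : Continuous y := Differentiable.continuous (fun u : ℝ => (hy u).differentiableAt)
  have hsameSign : (∀ t, s ≤ t → 0 < y t) ∨ (∀ t, s ≤ t → y t < 0) := by
    rcases lt_trichotomy (y s) 0 with h1 | h1 | h1
    · right
      intro t ht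
      rcases lt_trichotomy (y t) 0 with h2 | h2 | h2
      · exact h2
      · exact absurd h2 (hc t ht)
      · exfalso
        have : (0:ℝ) ∈ uIcc (y s) (y t) := by
          rw [mem_uIcc]; left; exact ⟨h1.le, h2.le⟩
        obtain ⟨c, hcmem, hc0⟩ := intermediate_value_uIcc hyc.continuousOn this
        rw [uIcc_of_le ht] at hcmem
        exact hc c hcmem.1 hc0
    · exact absurd h1 (hc s le_rfl)
    · left
      intro t ht
      rcases lt_trichotomy (y t) 0 with h2 | h2 | h2
      · exfalso
        have : (0:ℝ) ∈ uIcc (y s) (y t) := by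
          rw [mem_uIcc]; right; exact ⟨h2.le, h1.le⟩
        obtain ⟨c, hcmem, hc0⟩ := intermediate_value_uIcc hyc.continuousOn this
        rw [uIcc_of_le ht] at hcmem
        exact hc c hcmem.1 hc0
      · exact absurd h2 (hc t ht)
      · exact h2
  rcases hsameSign with hpos | hneg
  · exact no_forever_pos hgtc hsign hG hG0 hGtop hx hy hcons hpos
  · -- flip the system
    have hsign' : ∀ u : ℝ, u ≠ 0 → 0 < u * (-gt (-u)) := by
      intro u hu
      have h1 := hsign (-u) (neg_ne_zero.mpr hu)
      nlinarith
    have hG' : ∀ u : ℝ, HasDerivAt (fun v => G (-v)) (-gt (-u)) u := by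
      intro u
      have := (hG (-u)).comp u (hasDerivAt_neg u)
      simpa [mul_comm, Function.comp_def] using this
    have hGtop' : Tendsto (fun v => G (-v)) atTop atTop := hGbot.comp tendsto_neg_atTop_atBot
    have hx' : ∀ t, HasDerivAt (fun t => -x t) (-y t) t := fun t => (hx t).neg
    have hy' : ∀ t, HasDerivAt (fun t => -y t) (-(-gt (-(-x t)))) t := by
      intro t
      have := (hy t).neg
      simpa [Pi.neg_def] using this
    have hcons' : ∀ t, (-y t) ^ 2 / 2 + G (-(-x t)) = h := by
      intro t
      have := hcons t
      have h2 : (-y t)^2 = y t ^2 := by ring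
      rw [h2, neg_neg]
      exact this
    exact no_forever_pos (hgtc.comp continuous_neg).neg hsign' hG' (by simpa using hG0) hGtop'
      hx' hy' hcons' (fun t ht => neg_pos.mpr (hneg t ht))
private lemma G_nonneg {gt G : ℝ → ℝ}
    (hsign : ∀ u : ℝ, u ≠ 0 → 0 < u * gt u)
    (hG : ∀ u, HasDerivAt G (gt u) u) (hG0 : G 0 = 0) : ∀ u, 0 ≤ G u := by
  have hGc : Continuous G := Differentiable.continuous (fun u : ℝ => (hG u).differentiableAt)
  have hGmono : MonotoneOn G (Ici 0) := by
    apply monotoneOn_of_deriv_nonneg (convex_Ici 0) hGc.continuousOn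
    · exact fun u _ => (hG u).differentiableAt.differentiableWithinAt
    · intro u hu
      rw [(hG u).deriv]
      have hu0 : (0:ℝ) < u := by simpa using hu
      nlinarith [hsign u hu0.ne']
  have hGanti : AntitoneOn G (Iic 0) := by
    apply antitoneOn_of_deriv_nonpos (convex_Iic 0) hGc.continuousOn
    · exact fun u _ => (hG u).differentiableAt.differentiableWithinAt
    · intro u hu
      rw [(hG u).deriv]
      have hu0 : u < 0 := by simpa using hu
      nlinarith [hsign u hu0.ne]
  intro u
  rcases le_or_gt 0 u with hu | hu
  · rw [← hG0]; exact hGmono self_mem_Ici hu hu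
  · rw [← hG0]; exact hGanti hu.le self_mem_Iic hu.le

/-- **Global center in the polynomial class.** If `f₂` has odd degree with
positive leading coefficient and `x·g(x) > 0` for `x ≠ 0`, then
`G̃(x) = ∫₀^x g̃ → +∞` as `x → ±∞`, every level set of the Hamiltonian
`H(x,y) = y²/2 + G̃(x)` is bounded, and the origin is a global center of
`x' = y`, `y' = -g̃(x)`: every global solution starting away from the origin
is periodic. -/
theorem polynomial_global_center (f₂ g : Polynomial ℝ)
    (hg_sign : ∀ x : ℝ, x ≠ 0 → 0 < x * g.eval x)
    (hodd : Odd f₂.natDegree) (hlead : 0 < f₂.leadingCoeff)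
    (gtilde Gtilde : ℝ → ℝ)
    (hgtilde : ∀ x : ℝ,
      gtilde x = g.eval x * Real.exp (2 * ∫ r in (0:ℝ)..x, f₂.eval r))
    (hGtilde : ∀ x : ℝ, Gtilde x = ∫ s in (0:ℝ)..x, gtilde s) :
    Tendsto Gtilde atTop atTop ∧
    Tendsto Gtilde atBot atTop ∧
    (∀ c : ℝ, Bornology.IsBounded
      {p : ℝ × ℝ | p.2 ^ 2 / 2 + Gtilde p.1 = c}) ∧
    (∀ x y : ℝ → ℝ,
      (∀ t : ℝ, HasDerivAt x (y t) t) →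
      (∀ t : ℝ, HasDerivAt y (-gtilde (x t)) t) →
      (x 0, y 0) ≠ (0, 0) →
      ∃ T > 0, ∀ t : ℝ, x (t + T) = x t ∧ y (t + T) = y t) := by
  -- Continuity and FTC facts
  have hf2c : Continuous fun u : ℝ => f₂.eval u := f₂.continuous
  have hgc : Continuous fun u : ℝ => g.eval u := g.continuous
  have hFi : ∀ u : ℝ, HasDerivAt (fun v : ℝ => ∫ r in (0:ℝ)..v, f₂.eval r) (f₂.eval u) u :=
    fun u => intervalIntegral.integral_hasDerivAt_right (hf2c.intervalIntegrable _ _)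
      (hf2c.stronglyMeasurableAtFilter _ _) hf2c.continuousAt
  have hFic : Continuous fun v : ℝ => ∫ r in (0:ℝ)..v, f₂.eval r :=
    Differentiable.continuous fun u => (hFi u).differentiableAt
  have hexpc : Continuous fun v : ℝ => Real.exp (2 * ∫ r in (0:ℝ)..v, f₂.eval r) :=
    Real.continuous_exp.comp (continuous_const.mul hFic)
  have hgtc : Continuous gtilde := by
    rw [funext hgtilde]
    exact hgc.mul hexpc
  have hgt_sign : ∀ u : ℝ, u ≠ 0 → 0 < u * gtilde u := by
    intro u hu
    rw [hgtilde u, ← mul_assoc]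
    exact mul_pos (hg_sign u hu) (Real.exp_pos _)
  have hGd : ∀ u : ℝ, HasDerivAt Gtilde (gtilde u) u := by
    intro u
    rw [funext hGtilde]
    exact intervalIntegral.integral_hasDerivAt_right (hgtc.intervalIntegrable _ _)
      (hgtc.stronglyMeasurableAtFilter _ _) hgtc.continuousAt
  have hG0 : Gtilde 0 = 0 := by rw [hGtilde 0, intervalIntegral.integral_same]
  have hGnonneg : ∀ u, 0 ≤ Gtilde u := G_nonneg hgt_sign hGd hG0
  -- tendsto facts for f₂
  have hf2ndeg : 0 < f₂.natDegree := hodd.pos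
  have hf2deg : 0 < f₂.degree := Polynomial.natDegree_pos_iff_degree_pos.mp hf2ndeg
  have hf2top : Tendsto (fun u : ℝ => f₂.eval u) atTop atTop :=
    Polynomial.tendsto_atTop_of_leadingCoeff_nonneg f₂ hf2deg hlead.le
  have hf2bot : Tendsto (fun u : ℝ => f₂.eval u) atBot atBot := by
    set P : Polynomial ℝ := f₂.comp (-Polynomial.X) with hP
    have hPn : P.natDegree = f₂.natDegree := by
      rw [hP, Polynomial.natDegree_comp]; simp
    have hPlead : P.leadingCoeff = -f₂.leadingCoeff := by
      rw [hP, Polynomial.leadingCoeff_comp (by simp)]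
      rw [Polynomial.leadingCoeff_neg, Polynomial.leadingCoeff_X, hodd.neg_one_pow]
      ring
    have hPdeg : 0 < P.degree :=
      Polynomial.natDegree_pos_iff_degree_pos.mp (by rw [hPn]; exact hf2ndeg)
    have hPbot : Tendsto (fun u : ℝ => P.eval u) atTop atBot :=
      Polynomial.tendsto_atBot_of_leadingCoeff_nonpos P hPdeg (by rw [hPlead]; linarith)
    have h2 := hPbot.comp tendsto_neg_atBot_atTop
    apply h2.congr
    intro u
    simp [hP, Polynomial.eval_comp]
  -- tendsto facts for g
  have hgpos : ∀ u : ℝ, 0 < u → 0 < g.eval u := by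
    intro u hu
    rcases mul_pos_iff.mp (hg_sign u hu.ne') with ⟨_, h2⟩ | ⟨h1, _⟩
    · exact h2
    · linarith
  have hgneg : ∀ u : ℝ, u < 0 → g.eval u < 0 := by
    intro u hu
    rcases mul_pos_iff.mp (hg_sign u hu.ne) with ⟨h1, _⟩ | ⟨_, h2⟩
    · linarith
    · exact h2
  have hgdeg : 0 < g.degree := by
    by_contra hcon
    push_neg at hcon
    have heq := Polynomial.eq_C_of_degree_le_zero hcon
    have h1 := hgpos 1 one_pos
    have h2 := hgneg (-1) (by norm_num)
    rw [heq] at h1 h2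
    simp at h1 h2
    linarith
  have hgtop2 : Tendsto (fun u : ℝ => g.eval u) atTop atTop := by
    apply (Polynomial.abs_tendsto_atTop g hgdeg).congr'
    filter_upwards [eventually_gt_atTop 0] with u hu
    exact abs_of_pos (hgpos u hu)
  have hgbot2 : Tendsto (fun u : ℝ => g.eval u) atBot atBot := by
    set Q : Polynomial ℝ := g.comp (-Polynomial.X) with hQ
    have hQdeg : 0 < Q.degree := by
      apply Polynomial.natDegree_pos_iff_degree_pos.mp
      rw [hQ, Polynomial.natDegree_comp]
      simpa using Polynomial.natDegree_pos_iff_degree_pos.mpr hgdeg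
    have hQbot : Tendsto (fun u : ℝ => Q.eval u) atTop atBot := by
      have h1 : Tendsto (fun u : ℝ => -|Q.eval u|) atTop atBot :=
        tendsto_neg_atTop_atBot.comp (Polynomial.abs_tendsto_atTop Q hQdeg)
      apply h1.congr'
      filter_upwards [eventually_gt_atTop 0] with u hu
      have hQu : Q.eval u < 0 := by
        rw [hQ]
        simp only [Polynomial.eval_comp, Polynomial.eval_neg, Polynomial.eval_X]
        exact hgneg (-u) (by linarith)
      rw [abs_of_neg hQu]; ring
    have h2 := hQbot.comp tendsto_neg_atBot_atTop
    apply h2.congr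
    intro u
    simp [hQ, Polynomial.eval_comp]
  -- tendsto of the integral of f₂ and of gtilde
  have hFitop : Tendsto (fun v : ℝ => ∫ r in (0:ℝ)..v, f₂.eval r) atTop atTop :=
    tendsto_atTop_of_hasDerivAt_ev_ge hFi (hf2top.eventually_ge_atTop 1)
  have hFibot : Tendsto (fun v : ℝ => ∫ r in (0:ℝ)..v, f₂.eval r) atBot atTop :=
    tendsto_atBot_of_hasDerivAt_ev_le hFi (hf2bot.eventually_le_atBot (-1))
  have hexp_top : Tendsto (fun v : ℝ => Real.exp (2 * ∫ r in (0:ℝ)..v, f₂.eval r)) atTop atTop :=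
    Real.tendsto_exp_atTop.comp (hFitop.const_mul_atTop two_pos)
  have hexp_bot : Tendsto (fun v : ℝ => Real.exp (2 * ∫ r in (0:ℝ)..v, f₂.eval r)) atBot atTop :=
    Real.tendsto_exp_atTop.comp (hFibot.const_mul_atTop two_pos)
  have hgt_top : Tendsto gtilde atTop atTop := by
    rw [funext hgtilde]
    exact hgtop2.atTop_mul_atTop₀ hexp_top
  have hgt_bot : Tendsto gtilde atBot atBot := by
    rw [funext hgtilde]
    exact hgbot2.atBot_mul_atTop₀ hexp_bot
  have part1 : Tendsto Gtilde atTop atTop :=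
    tendsto_atTop_of_hasDerivAt_ev_ge hGd (hgt_top.eventually_ge_atTop 1)
  have part2 : Tendsto Gtilde atBot atTop :=
    tendsto_atBot_of_hasDerivAt_ev_le hGd (hgt_bot.eventually_le_atBot (-1))
  refine ⟨part1, part2, ?_, ?_⟩
  · -- bounded level sets
    intro c
    obtain ⟨A, hA⟩ := eventually_atTop.mp (part1.eventually_gt_atTop c)
    obtain ⟨B, hB⟩ := eventually_atBot.mp (part2.eventually_gt_atTop c)
    apply Bornology.IsBounded.subset ((isBounded_Icc B A).prod
      (isBounded_Icc (-(Real.sqrt (2 * max c 0))) (Real.sqrt (2 * max c 0))))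
    rintro ⟨px, py⟩ hp
    simp only [mem_setOf_eq] at hp
    have hGle : Gtilde px ≤ c := by nlinarith [sq_nonneg py]
    have hy2 : py ^ 2 ≤ 2 * max c 0 := by nlinarith [hGnonneg px, le_max_left c 0]
    have habs : |py| ≤ Real.sqrt (2 * max c 0) := by
      rw [← Real.sqrt_sq_eq_abs]
      exact Real.sqrt_le_sqrt hy2
    refine ⟨⟨?_, ?_⟩, abs_le.mp habs⟩
    · by_contra hc1
      push_neg at hc1
      exact absurd hGle (not_le.mpr (hB px hc1.le))
    · by_contra hc1
      push_neg at hc1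
      exact absurd hGle (not_le.mpr (hA px hc1.le))
  · -- periodicity
    intro x y hx hy _
    have hxc : Continuous x := Differentiable.continuous fun u : ℝ => (hx u).differentiableAt
    have hyc : Continuous y := Differentiable.continuous fun u : ℝ => (hy u).differentiableAt
    -- energy conservation
    have hE : ∀ t : ℝ, HasDerivAt (fun t => y t ^ 2 / 2 + Gtilde (x t)) 0 t := by
      intro t
      have h1 : HasDerivAt (fun t => y t ^ 2) ((2 : ℕ) * y t ^ 1 * (-gtilde (x t))) t :=
        (hy t).pow 2
      have h2 : HasDerivAt (fun t => Gtilde (x t)) (gtilde (x t) * y t) t :=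
        (hGd (x t)).comp t (hx t)
      have h3 : HasDerivAt (fun t => y t ^ 2 / 2 + Gtilde (x t)) _ t := (h1.div_const 2).add h2
      convert h3 using 1
      push_cast
      ring
    obtain ⟨h, hcons⟩ : ∃ h : ℝ, ∀ t : ℝ, y t ^ 2 / 2 + Gtilde (x t) = h :=
      ⟨y 0 ^ 2 / 2 + Gtilde (x 0), fun t =>
        is_const_of_deriv_eq_zero (fun u => (hE u).differentiableAt)
          (fun u => (hE u).deriv) t 0⟩
    -- trajectories stay in a fixed strip
    obtain ⟨A, hA⟩ := eventually_atTop.mp (part1.eventually_gt_atTop h)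
    obtain ⟨B, hB⟩ := eventually_atBot.mp (part2.eventually_gt_atTop h)
    have hxmem : ∀ t : ℝ, x t ∈ Icc B A := by
      intro t
      have hle : Gtilde (x t) ≤ h := by nlinarith [sq_nonneg (y t), hcons t]
      constructor
      · by_contra hc1
        push_neg at hc1
        exact absurd hle (not_le.mpr (hB (x t) hc1.le))
      · by_contra hc1
        push_neg at hc1
        exact absurd hle (not_le.mpr (hA (x t) hc1.le))
    -- Lipschitz bound for the vector field on the strip
    have hD : ∀ u : ℝ, HasDerivAt gtilde
        ((Polynomial.derivative g).eval u * Real.exp (2 * ∫ r in (0:ℝ)..u, f₂.eval r)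
          + g.eval u * (Real.exp (2 * ∫ r in (0:ℝ)..u, f₂.eval r) * (2 * f₂.eval u))) u := by
      intro u
      rw [funext hgtilde]
      exact (Polynomial.hasDerivAt g u).mul ((hFi u).const_mul 2).exp
    have hDc : Continuous fun u : ℝ =>
        (Polynomial.derivative g).eval u * Real.exp (2 * ∫ r in (0:ℝ)..u, f₂.eval r)
          + g.eval u * (Real.exp (2 * ∫ r in (0:ℝ)..u, f₂.eval r) * (2 * f₂.eval u)) :=
      ((Polynomial.derivative g).continuous.mul hexpc).add
        (hgc.mul (hexpc.mul (continuous_const.mul hf2c)))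
    obtain ⟨M, hM⟩ := (isCompact_Icc (a := B) (b := A)).exists_bound_of_continuousOn
      hDc.continuousOn
    set K₀ : ℝ≥0 := ⟨max M 0, le_max_right _ _⟩ with hK₀
    have hlip : LipschitzOnWith K₀ gtilde (Icc B A) := by
      apply Convex.lipschitzOnWith_of_nnnorm_hasDerivWithin_le (convex_Icc B A)
        (fun u _ => (hD u).hasDerivWithinAt)
      intro u hu
      rw [← NNReal.coe_le_coe, coe_nnnorm]
      exact le_trans (hM u hu) (le_max_left _ _)
    have hv : ∀ _t : ℝ, LipschitzOnWith (K₀ + 1)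
        ((fun (_ : ℝ) (p : ℝ × ℝ) => (p.2, -gtilde p.1)) _t) (Icc B A ×ˢ (univ : Set ℝ)) := by
      intro _t
      rw [lipschitzOnWith_iff_dist_le_mul]
      intro p hp q hq
      have hK1 : (1 : ℝ) ≤ ((K₀ + 1 : ℝ≥0) : ℝ) := by
        push_cast
        have := K₀.coe_nonneg
        linarith
      rw [Prod.dist_eq]
      apply max_le
      · calc dist p.2 q.2 ≤ dist p q := by rw [Prod.dist_eq]; exact le_max_right _ _
        _ ≤ ((K₀ + 1 : ℝ≥0) : ℝ) * dist p q := le_mul_of_one_le_left dist_nonneg hK1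
      · calc dist (-gtilde p.1) (-gtilde q.1) = dist (gtilde p.1) (gtilde q.1) :=
              dist_neg_neg _ _
        _ ≤ (K₀ : ℝ) * dist p.1 q.1 := hlip.dist_le_mul p.1 hp.1 q.1 hq.1
        _ ≤ (K₀ : ℝ) * dist p q := by
              apply mul_le_mul_of_nonneg_left _ K₀.coe_nonneg
              rw [Prod.dist_eq]
              exact le_max_left _ _
        _ ≤ ((K₀ + 1 : ℝ≥0) : ℝ) * dist p q := by
              apply mul_le_mul_of_nonneg_right _ dist_nonneg
              push_cast
              linarith
    -- reflection symmetry at any zero of y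
    have hrefl : ∀ t₀ : ℝ, y t₀ = 0 → ∀ t : ℝ,
        x (2 * t₀ - t) = x t ∧ y (2 * t₀ - t) = -y t := by
      intro t₀ hy0
      have hσ : ∀ t : ℝ, HasDerivAt (fun u : ℝ => 2 * t₀ - u) (-1) t := fun t => by
        simpa using (hasDerivAt_id t).const_sub (2 * t₀)
      have hgx : ∀ t : ℝ, HasDerivAt (fun u => x (2 * t₀ - u)) (-y (2 * t₀ - t)) t := by
        intro t
        have := (hx (2 * t₀ - t)).comp t (hσ t)
        simpa [Function.comp_def] using this
      have hgy : ∀ t : ℝ, HasDerivAt (fun u => -y (2 * t₀ - u)) (-gtilde (x (2 * t₀ - t))) t := by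
        intro t
        have := ((hy (2 * t₀ - t)).comp t (hσ t)).neg
        simpa [Function.comp_def, Pi.neg_def] using this
      have key : ∀ b : ℝ, t₀ ≤ b → x b = x (2 * t₀ - b) ∧ y b = -y (2 * t₀ - b) := by
        intro b hb
        have heq : ((fun t => (x t, y t)) : ℝ → ℝ × ℝ) b
            = (fun t => (x (2 * t₀ - t), -y (2 * t₀ - t))) b := by
          apply ODE_solution_unique_of_mem_Icc_right (v := fun (_ : ℝ) (p : ℝ × ℝ) => (p.2, -gtilde p.1))
            (s := fun _ => Icc B A ×ˢ (univ : Set ℝ)) (K := K₀ + 1) (fun t _ => hv t)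
            (hxc.prodMk hyc).continuousOn
            (fun t _ => ((hx t).prodMk (hy t)).hasDerivWithinAt)
            (fun t _ => ⟨hxmem t, mem_univ _⟩)
            (((hxc.comp (continuous_const.sub continuous_id)).prodMk
              (hyc.comp (continuous_const.sub continuous_id)).neg)).continuousOn
            (fun t _ => ((hgx t).prodMk (hgy t)).hasDerivWithinAt)
            (fun t _ => ⟨hxmem _, mem_univ _⟩)
            (by simp [show 2 * t₀ - t₀ = t₀ from by ring, hy0])
            (right_mem_Icc.mpr hb)
        simpa [Prod.ext_iff] using heq
      intro t
      rcases le_total t₀ t with ht | ht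
      · obtain ⟨h1, h2⟩ := key t ht
        exact ⟨h1.symm, by linarith⟩
      · obtain ⟨h1, h2⟩ := key (2 * t₀ - t) (by linarith)
        rw [show 2 * t₀ - (2 * t₀ - t) = t from by ring] at h1 h2
        exact ⟨h1, by linarith⟩
    -- two zeros of y
    obtain ⟨t₀, _, hy₀⟩ :=
      exists_y_zero hgtc hgt_sign hGd hG0 part1 part2 hx hy hcons 0
    obtain ⟨t₁, ht₁, hy₁⟩ :=
      exists_y_zero hgtc hgt_sign hGd hG0 part1 part2 hx hy hcons (t₀ + 1)
    refine ⟨2 * (t₁ - t₀), by linarith, fun t => ?_⟩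
    have e1 : t + 2 * (t₁ - t₀) = 2 * t₁ - (2 * t₀ - t) := by ring
    constructor
    · rw [e1, (hrefl t₁ hy₁ (2 * t₀ - t)).1, (hrefl t₀ hy₀ t).1]
    · rw [e1, (hrefl t₁ hy₁ (2 * t₀ - t)).2, (hrefl t₀ hy₀ t).2, neg_neg]
end

section
/- Let f_1, f_2 : ℝ → ℝ be locally Lipschitz and g : ℝ → ℝ be Lipschitz with x·g(x) > 0 for all x ≠ 0. Let ᾱ < β̄ < 0 and ȳ > 0. Then the maximal solution (u, v) of the system u' = v, v' = -f_1(u) v - f_2(u) v² - g(u) with initial condition u(0) = ᾱ, v(0) = ȳ reaches the vertical line u = β̄ in finite forward time: there exists t* > 0 in the maximal interval of existence with u(t*) = β̄. -/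
open Set Filter MeasureTheory intervalIntegral Real Topology

private lemma clamp_abs_sub_le (m M y y' : ℝ) :
    |max m (min M y) - max m (min M y')| ≤ |y - y'| := by
  rw [max_comm m (min M y), max_comm m (min M y')]
  refine (abs_max_sub_max_le_abs _ _ _).trans ?_
  refine (abs_min_sub_min_le_max M y M y').trans ?_
  simp

private lemma gronwallBound_mono_x {δ K ε x y : ℝ} (hδ : 0 ≤ δ) (hε : 0 ≤ ε) (hK : 0 < K)
    (hxy : x ≤ y) : gronwallBound δ K ε x ≤ gronwallBound δ K ε y := by
  rw [gronwallBound_of_K_ne_0 hK.ne']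
  simp only
  have h1 : Real.exp (K * x) ≤ Real.exp (K * y) :=
    Real.exp_le_exp.mpr (by nlinarith)
  have h2 : 0 ≤ ε / K := div_nonneg hε hK.le
  nlinarith

private lemma le_gronwallBound_self {δ K ε t : ℝ} (hδ : 0 ≤ δ) (hε : 0 ≤ ε) (hK : 0 < K)
    (ht : 0 ≤ t) : δ ≤ gronwallBound δ K ε t := by
  rw [gronwallBound_of_K_ne_0 hK.ne']
  simp only
  have h1 : (1:ℝ) ≤ Real.exp (K * t) := Real.one_le_exp (by positivity)
  have h2 : 0 ≤ ε / K := div_nonneg hε hK.le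
  nlinarith

set_option maxHeartbeats 1000000 in
/-- **Continuability across a strip.** For `ᾱ < β̄ < 0` and `ȳ > 0`, the
solution of `u' = v`, `v' = -f₁(u) v - f₂(u) v² - g(u)` starting at
`(ᾱ, ȳ)` reaches the vertical line `u = β̄` in finite forward time: there is
a solution on some interval `[0, t*]` with `u(0) = ᾱ`, `v(0) = ȳ` and
`u(t*) = β̄`. -/
theorem solution_reaches_vertical_line (f₁ f₂ g : ℝ → ℝ)
    (hf₁ : LocallyLipschitz f₁) (hf₂ : LocallyLipschitz f₂)
    (hg : ∃ K : NNReal, LipschitzWith K g)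
    (hg_sign : ∀ x : ℝ, x ≠ 0 → 0 < x * g x)
    (α β ybar : ℝ) (hαβ : α < β) (hβ : β < 0) (hybar : 0 < ybar) :
    ∃ (tstar : ℝ) (u v : ℝ → ℝ), 0 < tstar ∧
      u 0 = α ∧ v 0 = ybar ∧
      (∀ t ∈ Set.Icc (0:ℝ) tstar,
        HasDerivWithinAt u (v t) (Set.Icc (0:ℝ) tstar) t) ∧
      (∀ t ∈ Set.Icc (0:ℝ) tstar,
        HasDerivWithinAt v
          (-(f₁ (u t) * v t) - f₂ (u t) * v t ^ 2 - g (u t))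
          (Set.Icc (0:ℝ) tstar) t) ∧
      u tstar = β := by
  obtain ⟨Kg, hKg⟩ := hg
  have hgc : Continuous g := hKg.continuous
  have hf₁c : Continuous f₁ := hf₁.continuous
  have hf₂c : Continuous f₂ := hf₂.continuous
  set a₀ : ℝ := α - 1 with ha₀def
  set b₀ : ℝ := β / 2 with hb₀def
  have hb₀neg : b₀ < 0 := by rw [hb₀def]; linarith
  have hβb₀ : β < b₀ := by rw [hb₀def]; linarith
  have ha₀α : a₀ < α := by rw [ha₀def]; linarith
  have hαb₀ : α < b₀ := hαβ.trans hβb₀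
  have ha₀b₀ : a₀ < b₀ := ha₀α.trans hαb₀
  -- bounds for f₁, f₂, g on the strip
  obtain ⟨A₀, hA₀⟩ := isCompact_Icc.exists_bound_of_continuousOn
    (hf₁c.continuousOn : ContinuousOn f₁ (Icc a₀ b₀))
  obtain ⟨B₀, hB₀⟩ := isCompact_Icc.exists_bound_of_continuousOn
    (hf₂c.continuousOn : ContinuousOn f₂ (Icc a₀ b₀))
  obtain ⟨G₀, hG₀⟩ := isCompact_Icc.exists_bound_of_continuousOn
    (hgc.continuousOn : ContinuousOn g (Icc a₀ b₀))
  set A : ℝ := max A₀ 0 with hAdef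
  set B : ℝ := max B₀ 0 with hBdef
  set G : ℝ := max G₀ 0 with hGdef
  have hA0 : 0 ≤ A := le_max_right _ _
  have hB0 : 0 ≤ B := le_max_right _ _
  have hG0 : 0 ≤ G := le_max_right _ _
  have hA : ∀ x ∈ Icc a₀ b₀, |f₁ x| ≤ A := fun x hx =>
    le_trans (by simpa [Real.norm_eq_abs] using hA₀ x hx) (le_max_left _ _)
  have hB : ∀ x ∈ Icc a₀ b₀, |f₂ x| ≤ B := fun x hx =>
    le_trans (by simpa [Real.norm_eq_abs] using hB₀ x hx) (le_max_left _ _)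
  have hG : ∀ x ∈ Icc a₀ b₀, |g x| ≤ G := fun x hx =>
    le_trans (by simpa [Real.norm_eq_abs] using hG₀ x hx) (le_max_left _ _)
  -- g is bounded away from 0 (negatively) on the strip
  obtain ⟨xm, hxmK, hxmax⟩ := isCompact_Icc.exists_isMaxOn
    (nonempty_Icc.mpr ha₀b₀.le) (hgc.continuousOn : ContinuousOn g (Icc a₀ b₀))
  set δ : ℝ := -g xm with hδdef
  have hgxm : g xm < 0 := by
    have hxmneg : xm < 0 := lt_of_le_of_lt hxmK.2 hb₀neg
    nlinarith [hg_sign xm hxmneg.ne]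
  have hδ0 : 0 < δ := by rw [hδdef]; linarith
  have hδ : ∀ x ∈ Icc a₀ b₀, g x ≤ -δ := by
    intro x hx; have := hxmax hx; rw [hδdef]; simpa using this
  -- the lower clamp m
  set m : ℝ := min ybar (min 1 (δ / (A + B + 1))) with hmdef
  have hm0 : 0 < m := lt_min hybar (lt_min one_pos (div_pos hδ0 (by linarith)))
  have hmybar : m ≤ ybar := min_le_left _ _
  have hm1 : m ≤ 1 := le_trans (min_le_right _ _) (min_le_left _ _)
  have hmdiv : m * (A + B + 1) ≤ δ := by
    have h : m ≤ δ / (A + B + 1) :=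
      le_trans (min_le_right _ _) (min_le_right 1 (δ / (A + B + 1)))
    rw [← le_div_iff₀ (by linarith : (0:ℝ) < A + B + 1)]
    exact h
  -- barrier positivity
  have hkey : ∀ x ∈ Icc a₀ b₀, 1 ≤ -f₁ x - f₂ x * m - g x / m := by
    intro x hx
    have e1 : f₁ x ≤ A := (le_abs_self _).trans (hA x hx)
    have e2 : f₂ x ≤ B := (le_abs_self _).trans (hB x hx)
    have e3 : g x ≤ -δ := hδ x hx
    have e4 : A + B + 1 ≤ δ / m := (le_div_iff₀ hm0).mpr
      (by linarith only [hmdiv, (mul_comm m (A + B + 1) : m * (A+B+1) = (A+B+1) * m)])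
    have e5 : g x / m ≤ -(δ / m) := by
      rw [← neg_div]
      exact (div_le_div_iff_of_pos_right hm0).mpr e3
    have e6 : f₂ x * m ≤ B * m := mul_le_mul_of_nonneg_right e2 hm0.le
    have e7 : B * m ≤ B := by
      calc B * m ≤ B * 1 := mul_le_mul_of_nonneg_left hm1 hB0
        _ = B := mul_one B
    linarith only [e1, e4, e5, e6, e7]
  -- the upper clamp M via Grönwall bound
  set Kc : ℝ := B + 1 with hKcdef
  have hKc0 : 0 < Kc := by linarith
  set εc : ℝ := A + B + G / m with hεcdef
  have hεc0 : 0 ≤ εc := add_nonneg (add_nonneg hA0 hB0) (div_nonneg hG0 hm0.le)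
  set M : ℝ := gronwallBound ybar Kc εc (b₀ - α) + 1 with hMdef
  have hybarM : ybar < M := by
    have := le_gronwallBound_self (t := b₀ - α) hybar.le hεc0 hKc0 (by linarith)
    linarith
  have hmM : m ≤ M := hmybar.trans hybarM.le
  have hM0 : 0 < M := hm0.trans_le hmM
  -- clamps
  set cy : ℝ → ℝ := fun y => max m (min M y) with hcydef
  have hcy1 : ∀ y, m ≤ cy y := fun y => le_max_left _ _
  have hcy2 : ∀ y, cy y ≤ M := fun y => max_le hmM (min_le_left _ _)
  have hcy0 : ∀ y, 0 < cy y := fun y => hm0.trans_le (hcy1 y)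
  have hcyeq : ∀ y, m ≤ y → y ≤ M → cy y = y := by
    intro y h1 h2; rw [hcydef]; simp only [min_eq_right h2, max_eq_right h1]
  have hcylow : ∀ y, y < m → cy y = m := by
    intro y h; rw [hcydef]
    simp only [min_eq_right (h.le.trans hmM), max_eq_left h.le]
  -- the vector field
  set F : ℝ → ℝ → ℝ := fun x y => -f₁ x - f₂ x * cy y - g x / cy y with hFdef
  set C : ℝ := A + B * M + G / m with hCdef
  have hC0 : 0 ≤ C := add_nonneg (add_nonneg hA0 (mul_nonneg hB0 hM0.le))
    (div_nonneg hG0 hm0.le)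
  have hFbd : ∀ x ∈ Icc a₀ b₀, ∀ y, |F x y| ≤ C := by
    intro x hx y
    have h1 : |f₂ x * cy y| ≤ B * M := by
      rw [abs_mul, abs_of_pos (hcy0 y)]
      exact mul_le_mul (hB x hx) (hcy2 y) (hcy0 y).le hB0
    have h2 : |g x / cy y| ≤ G / m := by
      rw [abs_div, abs_of_pos (hcy0 y)]
      exact div_le_div₀ hG0 (hG x hx) hm0 (hcy1 y)
    calc |F x y| ≤ |(-f₁ x - f₂ x * cy y)| + |g x / cy y| := abs_sub _ _
      _ ≤ (|(-f₁ x)| + |f₂ x * cy y|) + |g x / cy y| :=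
          add_le_add_left (abs_sub _ _) _
      _ = (|f₁ x| + |f₂ x * cy y|) + |g x / cy y| := by rw [abs_neg]
      _ ≤ (A + B * M) + G / m := add_le_add (add_le_add (hA x hx) h1) h2
      _ = C := rfl
  set R : ℝ := C * max (b₀ - α) (α - a₀) + 1 with hRdef
  have hR0 : 0 ≤ R := by
    have h1 : (0:ℝ) ≤ max (b₀ - α) (α - a₀) := le_max_of_le_left (by linarith)
    have h2 : 0 ≤ C * max (b₀ - α) (α - a₀) := mul_nonneg hC0 h1
    linarith
  set Lr : ℝ := B + G / (m * m) with hLrdef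
  have hLr0 : 0 ≤ Lr := add_nonneg hB0 (div_nonneg hG0 (mul_self_nonneg m))
  have hFlip : ∀ x ∈ Icc a₀ b₀,
      LipschitzOnWith (Real.toNNReal Lr) (F x) (Metric.closedBall ybar R) := by
    intro x hx
    apply LipschitzOnWith.of_dist_le' (K := Lr)
    intro y _ y' _
    rw [Real.dist_eq, Real.dist_eq]
    set a := cy y with ha
    set b := cy y' with hb
    have hcl : |a - b| ≤ |y - y'| := clamp_abs_sub_le m M y y'
    have hFdiff : F x y - F x y' = f₂ x * (b - a) + g x * (1/b - 1/a) := by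
      rw [hFdef]; simp only; rw [← ha, ← hb]; field_simp
      ring
    have hinv : |1/b - 1/a| ≤ |y - y'| / (m * m) := by
      have : 1/b - 1/a = (a - b) / (b * a) := by
        have hb0 : b ≠ 0 := (hcy0 y').ne'
        have ha0 : a ≠ 0 := (hcy0 y).ne'
        rw [div_sub_div _ _ hb0 ha0]; ring
      rw [this, abs_div, abs_of_pos (mul_pos (hcy0 y') (hcy0 y))]
      apply div_le_div₀ (by positivity) hcl (by positivity)
      exact mul_le_mul (hcy1 y') (hcy1 y) hm0.le (hcy0 y').le
    calc |F x y - F x y'| = |f₂ x * (b - a) + g x * (1/b - 1/a)| := by rw [hFdiff]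
      _ ≤ |f₂ x * (b - a)| + |g x * (1/b - 1/a)| := abs_add_le _ _
      _ ≤ B * |y - y'| + G * (|y - y'| / (m * m)) := by
          rw [abs_mul, abs_mul]
          exact add_le_add
            (mul_le_mul (hB x hx) (by rw [abs_sub_comm]; exact hcl) (abs_nonneg _) hB0)
            (mul_le_mul (hG x hx) hinv (abs_nonneg _) hG0)
      _ = Lr * |y - y'| := by rw [hLrdef]; ring
  have hPL : IsPicardLindelof F (tmin := a₀) (tmax := b₀) ⟨α, ha₀α.le, hαb₀.le⟩ ybar
      (Real.toNNReal R) 0 (Real.toNNReal C) (Real.toNNReal Lr) := by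
    refine ⟨fun t ht => by rw [Real.coe_toNNReal _ hR0]; exact hFlip t ht, ?_, ?_, ?_⟩
    · intro y _
      exact (((hf₁c.neg).sub (hf₂c.mul continuous_const)).sub
        (hgc.div_const _)).continuousOn
    · intro t ht y _
      rw [Real.coe_toNNReal _ hC0, Real.norm_eq_abs]; exact hFbd t ht y
    · show (Real.toNNReal C : ℝ) * max (b₀ - α) (α - a₀) ≤ (Real.toNNReal R : ℝ) - ((0:NNReal):ℝ)
      rw [Real.coe_toNNReal _ hC0, Real.coe_toNNReal _ hR0, NNReal.coe_zero, sub_zero]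
      rw [hRdef]; linarith
  obtain ⟨w, hw0', hwode⟩ := hPL.exists_eq_forall_mem_Icc_hasDerivWithinAt₀
  have hw0 : w α = ybar := hw0'
  have hwcont : ContinuousOn w (Icc a₀ b₀) := fun x hx => (hwode x hx).continuousWithinAt
  have hwdAt : ∀ x ∈ Ioo a₀ b₀, HasDerivAt w (F x (w x)) x := fun x hx =>
    (hwode x (Ioo_subset_Icc_self hx)).hasDerivAt (Icc_mem_nhds hx.1 hx.2)
  -- lower barrier
  have hlow : ∀ x ∈ Icc α b₀, m ≤ w x := by
    by_contra hcon
    push_neg at hcon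
    obtain ⟨x₀, hx₀, hx₀m⟩ := hcon
    have hsub : Icc α x₀ ⊆ Icc a₀ b₀ := Icc_subset_Icc ha₀α.le hx₀.2
    have hSclosed : IsClosed (Icc α x₀ ∩ w ⁻¹' (Ici m)) :=
      (hwcont.mono hsub).preimage_isClosed_of_isClosed isClosed_Icc isClosed_Ici
    have hScomp : IsCompact (Icc α x₀ ∩ w ⁻¹' (Ici m)) :=
      isCompact_Icc.of_isClosed_subset hSclosed inter_subset_left
    have hSne : (Icc α x₀ ∩ w ⁻¹' (Ici m)).Nonempty :=
      ⟨α, ⟨left_mem_Icc.mpr hx₀.1, by simp only [mem_preimage, mem_Ici, hw0]; exact hmybar⟩⟩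
    set s : ℝ := sSup (Icc α x₀ ∩ w ⁻¹' (Ici m)) with hsdef
    have hsS : s ∈ Icc α x₀ ∩ w ⁻¹' (Ici m) := hScomp.sSup_mem hSne
    have hαs : α ≤ s := hsS.1.1
    have hsx₀ : s < x₀ := by
      rcases lt_or_eq_of_le hsS.1.2 with h | h
      · exact h
      · exact absurd (h ▸ hsS.2 : m ≤ w x₀) (not_le.mpr hx₀m)
    have hIoc : ∀ x ∈ Ioc s x₀, w x < m := by
      intro x hx
      by_contra h
      push_neg at h
      have hxS : x ∈ Icc α x₀ ∩ w ⁻¹' (Ici m) := ⟨⟨hαs.trans hx.1.le, hx.2⟩, h⟩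
      exact absurd (le_csSup hScomp.bddAbove hxS) (not_le.mpr hx.1)
    have hmono : StrictMonoOn w (Icc s x₀) := by
      apply strictMonoOn_of_deriv_pos (convex_Icc _ _)
        (hwcont.mono (Icc_subset_Icc (by linarith) hx₀.2))
      intro x hx
      rw [interior_Icc] at hx
      have hxI : x ∈ Ioo a₀ b₀ := ⟨by linarith [hx.1], lt_of_lt_of_le hx.2 hx₀.2⟩
      rw [(hwdAt x hxI).deriv]
      have hwx : w x < m := hIoc x ⟨hx.1, hx.2.le⟩
      have hcw : cy (w x) = m := hcylow _ hwx
      show 0 < F x (w x)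
      rw [hFdef]; simp only; rw [hcw]
      linarith [hkey x (Ioo_subset_Icc_self hxI)]
    have : w s < w x₀ := hmono (left_mem_Icc.mpr hsx₀.le) (right_mem_Icc.mpr hsx₀.le) hsx₀
    have hws : m ≤ w s := hsS.2
    linarith
  -- Grönwall upper bound
  have hGB : ∀ x ∈ Icc α b₀, ‖w x‖ ≤ gronwallBound ybar Kc εc (x - α) := by
    apply norm_le_gronwallBound_of_norm_deriv_right_le
      (f' := fun t => F t (w t))
      (hwcont.mono (Icc_subset_Icc ha₀α.le le_rfl))
      (fun x hx => ((hwdAt x ⟨ha₀α.trans_le hx.1, hx.2⟩).hasDerivWithinAt))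
      (by rw [hw0, Real.norm_eq_abs, abs_of_pos hybar])
    intro x hx
    have hxI : x ∈ Icc α b₀ := Ico_subset_Icc_self hx
    have hwx : m ≤ w x := hlow x hxI
    have hwxpos : 0 < w x := hm0.trans_le hwx
    have hcwle : cy (w x) ≤ w x := by
      calc cy (w x) ≤ max m (w x) := max_le_max le_rfl (min_le_right _ _)
        _ = w x := max_eq_right hwx
    have hxK : x ∈ Icc a₀ b₀ := ⟨ha₀α.le.trans hxI.1, hxI.2⟩
    rw [Real.norm_eq_abs, Real.norm_eq_abs, abs_of_pos hwxpos]
    have h1 : |F x (w x)| ≤ A + B * cy (w x) + G / m := by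
      have h2 : |f₂ x * cy (w x)| ≤ B * cy (w x) := by
        rw [abs_mul, abs_of_pos (hcy0 _)]
        exact mul_le_mul_of_nonneg_right (hB x hxK) (hcy0 _).le
      have h3 : |g x / cy (w x)| ≤ G / m := by
        rw [abs_div, abs_of_pos (hcy0 _)]
        exact div_le_div₀ hG0 (hG x hxK) hm0 (hcy1 _)
      calc |F x (w x)| ≤ |(-f₁ x - f₂ x * cy (w x))| + |g x / cy (w x)| := abs_sub _ _
        _ ≤ (|(-f₁ x)| + |f₂ x * cy (w x)|) + |g x / cy (w x)| := by
            gcongr; exact abs_sub _ _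
        _ ≤ A + B * cy (w x) + G / m := by rw [abs_neg]; gcongr; exact hA x hxK
    have h4 : B * cy (w x) ≤ B * w x := mul_le_mul_of_nonneg_left hcwle hB0
    have h5 : B * w x ≤ Kc * w x :=
      mul_le_mul_of_nonneg_right (by rw [hKcdef]; linarith) hwxpos.le
    calc |F x (w x)| ≤ A + B * cy (w x) + G / m := h1
      _ ≤ Kc * w x + εc := by
          rw [hεcdef]
          have h6 : B * cy (w x) ≤ B + Kc * w x :=
            (h4.trans h5).trans (le_add_of_nonneg_left hB0)
          calc A + B * cy (w x) + G / m ≤ A + (B + Kc * w x) + G / m :=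
                add_le_add_left (add_le_add_right h6 A) _
            _ = Kc * w x + (A + B + G / m) := by ring
  have hupM : ∀ x ∈ Icc α b₀, w x < M := by
    intro x hx
    have h1 := hGB x hx
    rw [Real.norm_eq_abs] at h1
    have h2 : gronwallBound ybar Kc εc (x - α) ≤ gronwallBound ybar Kc εc (b₀ - α) :=
      gronwallBound_mono_x hybar.le hεc0 hKc0 (by linarith [hx.2])
    calc w x ≤ |w x| := le_abs_self _
      _ ≤ gronwallBound ybar Kc εc (x - α) := h1
      _ ≤ gronwallBound ybar Kc εc (b₀ - α) := h2
      _ < M := by rw [hMdef]; linarith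
  have hcyw : ∀ x ∈ Icc α b₀, cy (w x) = w x := fun x hx =>
    hcyeq _ (hlow x hx) (hupM x hx).le
  -- extend positivity slightly to the left of α
  have hca : ContinuousAt w α := hwcont.continuousAt (Icc_mem_nhds ha₀α hαb₀)
  obtain ⟨η, hη0, hη⟩ := Metric.continuousAt_iff.mp hca (ybar/2) (by linarith)
  set a₁ : ℝ := α - min (η/2) ((α - a₀)/2) with ha₁def
  have hmin0 : 0 < min (η/2) ((α - a₀)/2) := lt_min (by linarith) (by linarith)
  have ha₁1 : a₀ < a₁ := by
    have := min_le_right (η/2) ((α - a₀)/2); rw [ha₁def]; linarith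
  have ha₁2 : a₁ < α := by rw [ha₁def]; linarith
  have ha₁b₀ : a₁ ≤ b₀ := by linarith
  have hwa₁ : ∀ x ∈ Icc a₁ α, ybar/2 < w x := by
    intro x hx
    have h1 : dist x α < η := by
      rw [Real.dist_eq, abs_of_nonpos (by linarith [hx.2])]
      have := min_le_left (η/2) ((α - a₀)/2)
      have := hx.1; rw [ha₁def] at this; linarith
    have h2 := hη h1
    rw [Real.dist_eq, hw0] at h2
    have := abs_lt.mp h2
    linarith [this.1]
  set c₀ : ℝ := min (ybar/2) m with hc₀def
  have hc₀0 : 0 < c₀ := lt_min (by linarith) hm0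
  have hwlow : ∀ x ∈ Icc a₁ b₀, c₀ ≤ w x := by
    intro x hx
    rcases le_total x α with h | h
    · exact (min_le_left _ _).trans (hwa₁ x ⟨hx.1, h⟩).le
    · exact (min_le_right _ _).trans (hlow x ⟨h, hx.2⟩)
  -- the clamped solution and reparametrization
  set cx : ℝ → ℝ := fun σ => max a₁ (min b₀ σ) with hcxdef
  have hcxmem : ∀ σ, cx σ ∈ Icc a₁ b₀ := fun σ =>
    ⟨le_max_left _ _, max_le ha₁b₀ (min_le_left _ _)⟩
  have hcxeq : ∀ σ ∈ Icc a₁ b₀, cx σ = σ := by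
    intro σ hσ; rw [hcxdef]; simp only [min_eq_right hσ.2, max_eq_right hσ.1]
  set wc : ℝ → ℝ := fun σ => w (cx σ) with hwcdef
  have hsub₁ : Icc a₁ b₀ ⊆ Icc a₀ b₀ := Icc_subset_Icc ha₁1.le le_rfl
  have hwccont : Continuous wc := by
    apply (hwcont.mono hsub₁).comp_continuous
    · exact continuous_const.max (continuous_const.min continuous_id)
    · exact hcxmem
  have hwcpos : ∀ σ, c₀ ≤ wc σ := fun σ => hwlow _ (hcxmem σ)
  have hwcpos' : ∀ σ, 0 < wc σ := fun σ => hc₀0.trans_le (hwcpos σ)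
  obtain ⟨W₀, hW₀⟩ := isCompact_Icc.exists_bound_of_continuousOn (hwcont.mono hsub₁)
  set W : ℝ := max W₀ 1 with hWdef
  have hW0 : 0 < W := lt_of_lt_of_le one_pos (le_max_right _ _)
  have hW : ∀ σ, wc σ ≤ W := fun σ =>
    (le_abs_self _).trans (le_trans (by simpa [Real.norm_eq_abs] using hW₀ _ (hcxmem σ))
      (le_max_left _ _))
  set ρ : ℝ → ℝ := fun σ => (wc σ)⁻¹ with hρdef
  have hρcont : Continuous ρ := hwccont.inv₀ fun σ => (hwcpos' σ).ne'
  have hρpos : ∀ σ, 0 < ρ σ := fun σ => inv_pos.mpr (hwcpos' σ)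
  have hρlb : ∀ σ, W⁻¹ ≤ ρ σ := fun σ => inv_anti₀ (hwcpos' σ) (hW σ)
  set τ : ℝ → ℝ := fun x => ∫ σ in α..x, ρ σ with hτdef
  have hτd : ∀ x, HasDerivAt τ (ρ x) x := fun x =>
    intervalIntegral.integral_hasDerivAt_right (hρcont.intervalIntegrable _ _)
      (hρcont.stronglyMeasurableAtFilter _ _) hρcont.continuousAt
  have hτc : Continuous τ := continuous_iff_continuousAt.mpr fun x => (hτd x).continuousAt
  have hτmono : StrictMono τ := strictMono_of_deriv_pos fun x => by
    rw [(hτd x).deriv]; exact hρpos x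
  have hτα : τ α = 0 := intervalIntegral.integral_same
  have hτlb : ∀ x, α ≤ x → W⁻¹ * (x - α) ≤ τ x := by
    intro x hx
    have h1 : (∫ σ in α..x, W⁻¹) ≤ ∫ σ in α..x, ρ σ :=
      intervalIntegral.integral_mono_on hx intervalIntegrable_const
        (hρcont.intervalIntegrable _ _) fun σ _ => hρlb σ
    rw [intervalIntegral.integral_const, smul_eq_mul, mul_comm] at h1
    exact h1
  have hτub : ∀ x, x ≤ α → τ x ≤ W⁻¹ * (x - α) := by
    intro x hx
    have h1 : (∫ σ in x..α, W⁻¹) ≤ ∫ σ in x..α, ρ σ :=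
      intervalIntegral.integral_mono_on hx intervalIntegrable_const
        (hρcont.intervalIntegrable _ _) fun σ _ => hρlb σ
    rw [intervalIntegral.integral_const, smul_eq_mul, mul_comm] at h1
    have h2 : τ x = -∫ σ in x..α, ρ σ := by
      rw [hτdef]; simp only; rw [← intervalIntegral.integral_symm]
    have h3 : W⁻¹ * (x - α) = -(W⁻¹ * (α - x)) := by ring
    rw [h2, h3]
    linarith only [h1]
  have hτsurj : Function.Surjective τ := by
    intro y
    set b1 : ℝ := α + (|y| + 1) * W with hb1def
    set a1' : ℝ := α - (|y| + 1) * W with ha1'def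
    have hWy : 0 < (|y| + 1) * W := by positivity
    have h1 : y ≤ τ b1 := by
      have := hτlb b1 (by rw [hb1def]; linarith)
      have heq : W⁻¹ * (b1 - α) = |y| + 1 := by
        rw [hb1def]
        calc W⁻¹ * (α + (|y| + 1) * W - α) = (|y| + 1) * (W * W⁻¹) := by ring
          _ = |y| + 1 := by rw [mul_inv_cancel₀ hW0.ne', mul_one]
      rw [heq] at this
      linarith [le_abs_self y]
    have h2 : τ a1' ≤ y := by
      have := hτub a1' (by rw [ha1'def]; linarith)
      have heq : W⁻¹ * (a1' - α) = -(|y| + 1) := by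
        rw [ha1'def]
        calc W⁻¹ * (α - (|y| + 1) * W - α) = -((|y| + 1) * (W * W⁻¹)) := by ring
          _ = -(|y| + 1) := by rw [mul_inv_cancel₀ hW0.ne', mul_one]
      rw [heq] at this
      linarith [neg_abs_le y]
    have hab : a1' ≤ b1 := by rw [ha1'def, hb1def]; linarith
    obtain ⟨x, _, hxy⟩ := intermediate_value_Icc hab hτc.continuousOn ⟨h2, h1⟩
    exact ⟨x, hxy⟩
  set E := StrictMono.orderIsoOfSurjective τ hτmono hτsurj with hEdef
  set u : ℝ → ℝ := fun t => E.symm t with hudef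
  have huτ : ∀ t, τ (u t) = t := fun t => E.apply_symm_apply t
  have hτu : ∀ x, u (τ x) = x := fun x =>
    StrictMono.orderIsoOfSurjective_symm_apply_self τ hτmono hτsurj x
  have hucont : Continuous u := E.symm.toHomeomorph.continuous
  have humono : Monotone u := E.symm.monotone
  set T : ℝ := τ β with hTdef
  have hT0 : 0 < T := by rw [hTdef, ← hτα]; exact hτmono hαβ
  have huT : u T = β := hτu β
  have hu0 : u 0 = α := by rw [← hτα]; exact hτu α
  have hurange : ∀ t ∈ Icc (0:ℝ) T, u t ∈ Icc α β := by
    intro t ht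
    constructor
    · rw [← hu0]; exact humono ht.1
    · rw [← huT]; exact humono ht.2
  have hud : ∀ t, HasDerivAt u (wc (u t)) t := by
    intro t
    have h := HasDerivAt.of_local_left_inverse hucont.continuousAt (hτd (u t))
      (hρpos (u t)).ne' (Eventually.of_forall huτ)
    rwa [hρdef, inv_inv] at h
  set v : ℝ → ℝ := fun t => wc (u t) with hvdef
  have hkey2 : ∀ t ∈ Icc (0:ℝ) T, u t ∈ Icc α β ∧ wc (u t) = w (u t) ∧ m ≤ w (u t) := by
    intro t ht
    have hx := hurange t ht
    have hxab : u t ∈ Icc a₁ b₀ := ⟨ha₁2.le.trans hx.1, hx.2.trans hβb₀.le⟩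
    refine ⟨hx, ?_, hlow _ ⟨hx.1, hx.2.trans hβb₀.le⟩⟩
    rw [hwcdef]; simp only; rw [hcxeq _ hxab]
  have hvd : ∀ t ∈ Icc (0:ℝ) T,
      HasDerivAt v (-(f₁ (u t) * v t) - f₂ (u t) * v t ^ 2 - g (u t)) t := by
    intro t ht
    obtain ⟨hx, hwcu, hwm⟩ := hkey2 t ht
    have hxm : u t ∈ Ioo a₀ b₀ := ⟨ha₀α.trans_le hx.1, lt_of_le_of_lt hx.2 hβb₀⟩
    have hnhds : Ioo a₁ b₀ ∈ 𝓝 (u t) :=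
      Ioo_mem_nhds (ha₁2.trans_le hx.1) (lt_of_le_of_lt hx.2 hβb₀)
    have hwcw : wc =ᶠ[𝓝 (u t)] w := by
      filter_upwards [hnhds] with σ hσ
      rw [hwcdef]; simp only; rw [hcxeq σ (Ioo_subset_Icc_self hσ)]
    have hwd : HasDerivAt w (F (u t) (w (u t))) (u t) := hwdAt _ hxm
    have hwcd : HasDerivAt wc (F (u t) (w (u t))) (u t) := hwd.congr_of_eventuallyEq hwcw
    have hvd0 : HasDerivAt v (F (u t) (w (u t)) * wc (u t)) t := hwcd.comp t (hud t)
    have hxab : u t ∈ Icc α b₀ := ⟨hx.1, hx.2.trans hβb₀.le⟩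
    have hcw : cy (w (u t)) = w (u t) := hcyw _ hxab
    have hwne : w (u t) ≠ 0 := (hm0.trans_le hwm).ne'
    have hval : F (u t) (w (u t)) * wc (u t)
        = -(f₁ (u t) * v t) - f₂ (u t) * v t ^ 2 - g (u t) := by
      rw [hvdef]; simp only
      rw [hwcu, hFdef]; simp only; rw [hcw]
      field_simp
    rwa [hval] at hvd0
  refine ⟨T, u, v, hT0, hu0, ?_, ?_, ?_, huT⟩
  · rw [hvdef]; simp only; rw [hu0, hwcdef]; simp only
    rw [hcxeq α ⟨ha₁2.le, hαb₀.le⟩, hw0]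
  · intro t ht
    exact ((hud t).hasDerivWithinAt : HasDerivWithinAt u (v t) _ t)
  · intro t ht
    exact (hvd t ht).hasDerivWithinAt
end
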